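/- arXiv:1409.7979 — 14 statements merged into one kernel-verified Lean document; each statement's English description precedes it below -/
import Mathlib

section
/- Let v_1 ≥ v_2 ≥ ... ≥ v_N ≥ 0 be real valuations. For each i define the static monopoly price p_i of the subgame on consumers {i,...,N} as p_i = v_{y_i} where y_i = argmax_{j≥i} (j-i+1)·v_j. Then the static monopoly prices are non-increasing in i: p_i ≥ p_{i+1} for all i = 1,...,N-1. -/
/- STATEMENT 0: With valuations `v 1 ≥ v 2 ≥ ... ≥ v N ≥ 0` and `y i` an argmax of
`(j - i + 1) * v j` over `i ≤ j ≤ N` (so that `p i = v (y i)` is the static monopoly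
price of the tail `{i, ..., N}`), the prices `p i` are non-increasing in `i`. -/
theorem static_monopoly_prices_nonincreasing
    (N : ℕ) (v : ℕ → ℝ) (y : ℕ → ℕ)
    (hN : 1 ≤ N)
    (hmono : ∀ i j, 1 ≤ i → i ≤ j → j ≤ N → v j ≤ v i)
    (hnonneg : ∀ i, 1 ≤ i → i ≤ N → 0 ≤ v i)
    (hy : ∀ i, 1 ≤ i → i ≤ N → i ≤ y i ∧ y i ≤ N ∧
      ∀ j, i ≤ j → j ≤ N → ((j : ℝ) - i + 1) * v j ≤ ((y i : ℝ) - i + 1) * v (y i)) :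
    ∀ i, 1 ≤ i → i < N → v (y (i + 1)) ≤ v (y i) := by
  intro i h1 hiN
  obtain ⟨hia, haN, hopt⟩ := hy i h1 (le_of_lt hiN)
  obtain ⟨hib, hbN, hopt'⟩ := hy (i + 1) (by omega) (by omega)
  set a := y i with ha
  set b := y (i + 1) with hb
  rcases eq_or_lt_of_le hia with heq | hlt
  · rw [← heq]
    exact hmono i b h1 (by omega) hbN
  · -- i + 1 ≤ a, so a is a candidate at i+1, and b is a candidate at i
    have h2 := hopt b (by omega) hbN
    have h3 := hopt' a (by omega) haN
    have hcb : (i : ℝ) ≤ b := by exact_mod_cast (by omega : i ≤ b)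
    have hca : (i : ℝ) < a := by exact_mod_cast hlt
    push_cast at h2 h3
    nlinarith [h2, h3]
end

section
/- Let v_1 ≥ v_2 ≥ ... ≥ v_N ≥ 0 and let p_1 = v_{y_1} be the static monopoly price of the full game, where y_1 = argmax_j j·v_j. Then the static monopoly revenue satisfies y_1·v_{y_1} ≤ Σ_{j=1}^N p_j, where p_j is the static monopoly price of the subgame on consumers {j,...,N}. -/
/- STATEMENT 1: With valuations `v 1 ≥ ... ≥ v N ≥ 0`, tail static monopoly prices
`p j = v (y j)` where `y j` maximizes `(k - j + 1) * v k` over `j ≤ k ≤ N`, the full-game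
static monopoly revenue `y 1 * v (y 1)` is at most the sum of all tail prices. -/
theorem static_monopoly_revenue_le_sum_tail_prices
    (N : ℕ) (v : ℕ → ℝ) (y : ℕ → ℕ)
    (hN : 1 ≤ N)
    (hmono : ∀ i j, 1 ≤ i → i ≤ j → j ≤ N → v j ≤ v i)
    (hnonneg : ∀ i, 1 ≤ i → i ≤ N → 0 ≤ v i)
    (hy : ∀ i, 1 ≤ i → i ≤ N → i ≤ y i ∧ y i ≤ N ∧
      ∀ j, i ≤ j → j ≤ N → ((j : ℝ) - i + 1) * v j ≤ ((y i : ℝ) - i + 1) * v (y i)) :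
    (y 1 : ℝ) * v (y 1) ≤ ∑ j ∈ Finset.Icc 1 N, v (y j) := by
  have key : ∀ k, ∀ i, 1 ≤ i → i ≤ N → N ≤ i + k →
      ((y i : ℝ) - i + 1) * v (y i) ≤ ∑ j ∈ Finset.Icc i N, v (y j) := by
    intro k
    induction k with
    | zero =>
      intro i h1 hiN hk
      have hiN' : i = N := by omega
      obtain ⟨hyi1, hyi2, _⟩ := hy i h1 hiN
      have hyy : y i = i := by omega
      rw [hiN'] at *
      rw [Finset.Icc_self, Finset.sum_singleton, hyy]
      have : ((y N : ℝ) - N + 1) = 1 := by rw [hyy]; push_cast; ring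
      rw [hyy] at this
      nlinarith [hnonneg N hN le_rfl]
    | succ k ih =>
      intro i h1 hiN hk
      obtain ⟨hyi1, hyi2, hyopt⟩ := hy i h1 hiN
      have hins : Finset.Icc i N = insert i (Finset.Icc (i + 1) N) := by
        rw [Finset.Icc_add_one_left_eq_Ioc, Finset.Ioc_insert_left hiN]
      have hvnn : 0 ≤ ∑ j ∈ Finset.Icc (i + 1) N, v (y j) := by
        apply Finset.sum_nonneg
        intro j hj
        simp only [Finset.mem_Icc] at hj
        obtain ⟨hj1, hj2, _⟩ := hy j (by omega) hj.2
        exact hnonneg (y j) (by omega) hj2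
      rw [hins, Finset.sum_insert (by simp)]
      rcases eq_or_lt_of_le hyi1 with heq | hlt
      · have h1' : ((y i : ℝ) - i + 1) = 1 := by rw [← heq]; push_cast; ring
        rw [h1', one_mul]
        rw [← heq]
        linarith
      · have hi1N : i + 1 ≤ N := by omega
        have h2 := (hy (i + 1) (by omega) hi1N).2.2 (y i) (by omega) hyi2
        have h3 := ih (i + 1) (by omega) hi1N (by omega)
        have hvy : 0 ≤ v (y i) := hnonneg (y i) (by omega) hyi2
        have heq2 : ((y i : ℝ) - i + 1) * v (y i)
            = v (y i) + ((y i : ℝ) - (i + 1 : ℕ) + 1) * v (y i) := by push_cast; ring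
        rw [heq2]
        push_cast at h2 h3 ⊢
        linarith
  have h := key N 1 le_rfl hN (by omega)
  push_cast at h
  linarith
end

section
/- Let v_1 ≥ v_2 ≥ ... ≥ v_N ≥ 0 and for each i let p_i = v_{y_i} be the static monopoly price of the subgame on consumers {i,...,N}, where y_i = argmax_{j≥i} (j-i+1)·v_j. Then Σ_{i=1}^N p_i ≤ y_1·v_{y_1} + p_1, i.e., the sum of all tail static monopoly prices is at most the static monopoly revenue of the full game plus the static monopoly price of the full game. -/
/- STATEMENT 2: With valuations `v 1 ≥ ... ≥ v N ≥ 0` and tail static monopoly prices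
`p i = v (y i)`, the sum of all tail prices is at most the full-game static monopoly
revenue `y 1 * v (y 1)` plus the full-game static monopoly price `p 1 = v (y 1)`. -/
theorem sum_tail_prices_le_revenue_add_price
    (N : ℕ) (v : ℕ → ℝ) (y : ℕ → ℕ)
    (hN : 1 ≤ N)
    (hmono : ∀ i j, 1 ≤ i → i ≤ j → j ≤ N → v j ≤ v i)
    (hnonneg : ∀ i, 1 ≤ i → i ≤ N → 0 ≤ v i)
    (hy : ∀ i, 1 ≤ i → i ≤ N → i ≤ y i ∧ y i ≤ N ∧
      ∀ j, i ≤ j → j ≤ N → ((j : ℝ) - i + 1) * v j ≤ ((y i : ℝ) - i + 1) * v (y i)) :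
    ∑ i ∈ Finset.Icc 1 N, v (y i) ≤ (y 1 : ℝ) * v (y 1) + v (y 1) := by
  set R : ℕ → ℝ := fun i => ((y i : ℝ) - i + 1) * v (y i) with hR
  -- each R i is nonnegative for 1 ≤ i ≤ N
  have hRnn : ∀ i, 1 ≤ i → i ≤ N → 0 ≤ R i := by
    intro i h1 h2
    obtain ⟨hiy, hyN, _⟩ := hy i h1 h2
    have h1' : (i : ℝ) ≤ (y i : ℝ) := by exact_mod_cast hiy
    have := hnonneg (y i) (le_trans h1 hiy) hyN
    have : 0 ≤ ((y i : ℝ) - i + 1) := by linarith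
    exact mul_nonneg this (hnonneg (y i) (le_trans h1 hiy) hyN)
  -- key telescoping inequality
  have hstep : ∀ n, 1 ≤ n → n + 1 ≤ N → v (y (n + 1)) + R (n + 1) ≤ R n := by
    intro n h1 h2
    obtain ⟨hiy, hyN, hopt⟩ := hy (n + 1) (by omega) h2
    have := (hy n h1 (by omega)).2.2 (y (n + 1)) (by omega) hyN
    have hc : ((y (n+1) : ℝ) - n + 1) = ((y (n+1) : ℝ) - (n+1 : ℕ) + 1) + 1 := by
      push_cast; ring
    rw [hc] at this
    simp only [hR]
    nlinarith [this]
  -- sum from 2 to n is ≤ R 1 - R n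
  have hsum : ∀ n, 1 ≤ n → n ≤ N → ∑ i ∈ Finset.Icc 2 n, v (y i) ≤ R 1 - R n := by
    intro n h1 h2
    induction n with
    | zero => omega
    | succ m ih =>
      rcases Nat.eq_or_lt_of_le h1 with h | h
      · simp [← h]
      · have hm1 : 1 ≤ m := by omega
        have hmN : m ≤ N := by omega
        rw [Finset.sum_Icc_succ_top (by omega : 2 ≤ m + 1)]
        have := hstep m hm1 h2
        have := ih hm1 hmN
        linarith
  have hins : Finset.Icc 1 N = insert 1 (Finset.Icc 2 N) := by
    ext x; simp; omega
  rw [hins, Finset.sum_insert (by simp)]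
  have h1 := hsum N hN le_rfl
  have h2 := hRnn N hN le_rfl
  have hR1 : R 1 = (y 1 : ℝ) * v (y 1) := by simp [hR]
  linarith
end

section
/- Let v_1 ≥ v_2 ≥ ... ≥ v_N ≥ 0 with static monopoly revenue Π^M = max_j j·v_j. Then Σ_{i=1}^N p_i ≤ 2·Π^M, where p_i is the static monopoly price of the subgame on consumers {i,...,N}. -/
/- STATEMENT 3: With valuations `v 1 ≥ ... ≥ v N ≥ 0`, static monopoly revenue
`Π^M = y 1 * v (y 1)` (where `y 1` maximizes `j * v j`), the sum of all tail static
monopoly prices `p i = v (y i)` is at most `2 * Π^M`. -/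
theorem sum_tail_prices_le_two_mul_static_monopoly_revenue
    (N : ℕ) (v : ℕ → ℝ) (y : ℕ → ℕ)
    (hN : 1 ≤ N)
    (hmono : ∀ i j, 1 ≤ i → i ≤ j → j ≤ N → v j ≤ v i)
    (hnonneg : ∀ i, 1 ≤ i → i ≤ N → 0 ≤ v i)
    (hy : ∀ i, 1 ≤ i → i ≤ N → i ≤ y i ∧ y i ≤ N ∧
      ∀ j, i ≤ j → j ≤ N → ((j : ℝ) - i + 1) * v j ≤ ((y i : ℝ) - i + 1) * v (y i)) :
    ∑ i ∈ Finset.Icc 1 N, v (y i) ≤ 2 * ((y 1 : ℝ) * v (y 1)) := by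
  set R : ℕ → ℝ := fun i => ((y i : ℝ) - i + 1) * v (y i) with hR
  have key : ∀ n, 1 ≤ n → n ≤ N → ∑ i ∈ Finset.Icc 1 n, v (y i) ≤ v (y 1) + R 1 - R n := by
    intro n hn1
    induction n, hn1 using Nat.le_induction with
    | base => intro _; simp
    | succ n hn1 ih =>
      intro hsN
      have hnN : n ≤ N := le_trans (Nat.le_succ n) hsN
      obtain ⟨hy1, hy2, _⟩ := hy (n + 1) (by omega) hsN
      have hmax := (hy n hn1 hnN).2.2 (y (n + 1)) (by omega) hy2
      have hcast : ((y (n + 1) : ℝ) - n + 1) * v (y (n + 1))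
          = R (n + 1) + v (y (n + 1)) := by
        simp only [hR]; push_cast; ring
      rw [hcast] at hmax
      rw [Finset.sum_Icc_succ_top (by omega : 1 ≤ n + 1)]
      have hRn : R n = ((y n : ℝ) - n + 1) * v (y n) := rfl
      have := ih hnN
      linarith
  have h := key N hN le_rfl
  obtain ⟨hy11, hy12, _⟩ := hy 1 le_rfl hN
  obtain ⟨hyN1, hyN2, _⟩ := hy N hN le_rfl
  have hv1 : 0 ≤ v (y 1) := hnonneg _ hy11 hy12
  have hvN : 0 ≤ v (y N) := hnonneg _ (le_trans hN hyN1) hyN2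
  have hR1 : R 1 = (y 1 : ℝ) * v (y 1) := by simp only [hR]; push_cast; ring
  have hRN : 0 ≤ R N := by
    apply mul_nonneg _ hvN
    have : (N : ℝ) ≤ (y N : ℝ) := by exact_mod_cast hyN1
    linarith
  have hp1 : v (y 1) ≤ (y 1 : ℝ) * v (y 1) := by
    have : (1 : ℝ) ≤ (y 1 : ℝ) := by exact_mod_cast hy11
    nlinarith
  linarith [h, hR1 ▸ h]
end

section
/- Let V = {v_1 ≥ v_2 ≥ ... ≥ v_N} be a multiset of nonnegative values with k = argmax_i i·v_i and static monopoly price p_V = v_k. Suppose V' is obtained from V by replacing a single value v_j by a value v' with v_k ≤ v' < v_j, and V' is re-sorted in non-increasing order v'_1 ≥ ... ≥ v'_N. Then the static monopoly price of V' equals v_k. -/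
/-- Static monopoly price of a finite multiset of valuations: sort the values in
non-increasing order as `u 1 ≥ u 2 ≥ ...` and return `u k` where `k` is the largest
index maximizing the revenue `i * u i`. -/
noncomputable def smp (s : Multiset ℝ) : ℝ :=
  let l := s.sort (· ≥ ·)
  l.getD (((List.range l.length).reverse.argmax
    (fun i : ℕ => ((i : ℝ) + 1) * l.getD i 0)).getD 0) 0

section aux

lemma indexOf_revrange (N i : ℕ) (h : i < N) :
    (List.range N).reverse.idxOf i = N - 1 - i := by
  have hn : ((List.range N).reverse).Nodup := List.nodup_reverse.mpr (List.nodup_range (n := N))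
  have hlt : N - 1 - i < (List.range N).reverse.length := by simp; omega
  have hg : (List.range N).reverse[N-1-i]'hlt = i := by
    rw [List.getElem_reverse, List.getElem_range]
    simp; omega
  conv_lhs => rw [← hg]
  exact List.Nodup.idxOf_getElem hn _ _

lemma argmax_revrange_eq_some_iff (N : ℕ) (f : ℕ → ℝ) (k : ℕ) (hk : k < N) :
    (List.range N).reverse.argmax f = some k ↔
      (∀ i < N, f i ≤ f k) ∧ (∀ i < N, f k ≤ f i → i ≤ k) := by
  rw [List.argmax_eq_some_iff]
  simp only [List.mem_reverse, List.mem_range]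
  constructor
  · rintro ⟨-, h1, h2⟩
    refine ⟨h1, fun i hi hfi => ?_⟩
    have := h2 i hi hfi
    rw [indexOf_revrange N k hk, indexOf_revrange N i hi] at this
    omega
  · rintro ⟨h1, h2⟩
    refine ⟨hk, h1, fun i hi hfi => ?_⟩
    rw [indexOf_revrange N k hk, indexOf_revrange N i hi]
    have := h2 i hi hfi; omega

lemma takeWhile_length_mono {α : Type*} (p q : α → Bool) (h : ∀ a, p a = true → q a = true) :
    ∀ l : List α, (l.takeWhile p).length ≤ (l.takeWhile q).length
  | [] => le_refl _
  | a :: l => by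
    by_cases hp : p a = true
    · rw [List.takeWhile_cons_of_pos hp, List.takeWhile_cons_of_pos (h a hp)]
      simpa using takeWhile_length_mono p q h l
    · rw [List.takeWhile_cons_of_neg hp]
      exact Nat.zero_le _

lemma sorted_getD_mono {L : List ℝ} (hL : L.Pairwise (· ≥ ·)) (h0 : ∀ a ∈ L, 0 ≤ a)
    {i j : ℕ} (hij : i ≤ j) : L.getD j 0 ≤ L.getD i 0 := by
  by_cases hj : j < L.length
  · have hi : i < L.length := lt_of_le_of_lt hij hj
    rw [List.getD_eq_getElem _ _ hi, List.getD_eq_getElem _ _ hj]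
    rcases eq_or_lt_of_le hij with rfl | hlt
    · exact le_refl _
    · exact hL.rel_get_of_lt (a := ⟨i, hi⟩) (b := ⟨j, hj⟩) hlt
  · rw [List.getD_eq_default _ _ (not_lt.mp hj)]
    by_cases hi : i < L.length
    · rw [List.getD_eq_getElem _ _ hi]
      exact h0 _ (List.getElem_mem hi)
    · rw [List.getD_eq_default _ _ (not_lt.mp hi)]

lemma ordIns_facts (M : List ℝ) (x : ℝ) (hx : 0 ≤ x) :
    (M.takeWhile fun b => ¬ x ≥ b).length ≤ M.length ∧
    (∀ i < (M.takeWhile fun b => ¬ x ≥ b).length, x < M.getD i 0) ∧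
    M.getD (M.takeWhile fun b => ¬ x ≥ b).length 0 ≤ x ∧
    (∀ i < (M.takeWhile fun b => ¬ x ≥ b).length,
      (M.orderedInsert (· ≥ ·) x).getD i 0 = M.getD i 0) ∧
    (M.orderedInsert (· ≥ ·) x).getD (M.takeWhile fun b => ¬ x ≥ b).length 0 = x ∧
    (∀ i, (M.takeWhile fun b => ¬ x ≥ b).length < i →
      (M.orderedInsert (· ≥ ·) x).getD i 0 = M.getD (i - 1) 0) := by
  set A := M.takeWhile fun b => ¬ x ≥ b with hA
  set B := M.dropWhile fun b => ¬ x ≥ b with hB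
  set c := A.length with hc
  have hMAB : A ++ B = M := List.takeWhile_append_dropWhile (p := fun b => decide ¬ x ≥ b) (l := M)
  have hMlen : c + B.length = M.length := by
    conv_rhs => rw [← hMAB]
    rw [List.length_append]
  have hcle : c ≤ M.length := by omega
  have hLsplit : M.orderedInsert (· ≥ ·) x = A ++ x :: B :=
    List.orderedInsert_eq_take_drop _ x M
  have hLlen : (M.orderedInsert (· ≥ ·) x).length = M.length + 1 :=
    List.orderedInsert_length _ M x
  refine ⟨hcle, ?_, ?_, ?_, ?_, ?_⟩
  · intro i hi
    have hilen : i < M.length := lt_of_lt_of_le hi hcle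
    rw [List.getD_eq_getElem _ _ hilen]
    have hpref : A <+: M := M.takeWhile_prefix _
    rw [← hpref.getElem hi]
    have hmem : A[i]'hi ∈ A := List.getElem_mem hi
    have := List.mem_takeWhile_imp hmem
    simpa using this
  · rcases eq_or_lt_of_le hcle with heq | hlt
    · rw [List.getD_eq_default _ _ heq.ge]; exact hx
    · rw [List.getD_eq_getElem _ _ hlt]
      have hBne : B ≠ [] := by
        intro h
        rw [h] at hMlen; simp at hMlen; omega
      have hxhead : x ≥ B.head hBne := by
        have hhead := List.head_dropWhile_not (fun b => decide ¬ x ≥ b) hBne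
        exact not_not.mp (of_decide_eq_false hhead)
      have hMc : M[c]'hlt = B.head hBne := by
        have h1 : M[c]'hlt = (A ++ B)[c]'(by rw [hMAB]; exact hlt) :=
          List.getElem_of_eq hMAB.symm hlt
        rw [h1, List.getElem_append_right (le_refl c)]
        simp only [hc, Nat.sub_self]
        exact List.getElem_zero _
      rw [hMc]; exact hxhead
  · intro i hi
    have hilen : i < M.length := lt_of_lt_of_le hi hcle
    have hiL : i < (M.orderedInsert (· ≥ ·) x).length := by omega
    rw [List.getD_eq_getElem _ _ hiL, List.getD_eq_getElem _ _ hilen]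
    have h1 : (M.orderedInsert (· ≥ ·) x)[i]'hiL = (A ++ x :: B)[i]'(by
        rw [← hLsplit]; exact hiL) := List.getElem_of_eq hLsplit hiL
    rw [h1, List.getElem_append_left hi]
    have hpref : A <+: M := M.takeWhile_prefix _
    exact hpref.getElem hi
  · have hcL : c < (M.orderedInsert (· ≥ ·) x).length := by omega
    rw [List.getD_eq_getElem _ _ hcL]
    have h1 : (M.orderedInsert (· ≥ ·) x)[c]'hcL = (A ++ x :: B)[c]'(by
        rw [← hLsplit]; exact hcL) := List.getElem_of_eq hLsplit hcL
    rw [h1, List.getElem_append_right (le_refl c)]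
    simp [hc]
  · intro i hi
    by_cases hiL : i < (M.orderedInsert (· ≥ ·) x).length
    · have hi1 : i - 1 < M.length := by omega
      rw [List.getD_eq_getElem _ _ hiL, List.getD_eq_getElem _ _ hi1]
      have h1 : (M.orderedInsert (· ≥ ·) x)[i]'hiL = (A ++ x :: B)[i]'(by
          rw [← hLsplit]; exact hiL) := List.getElem_of_eq hLsplit hiL
      have h2 : M[i-1]'hi1 = (A ++ B)[i-1]'(by rw [hMAB]; exact hi1) :=
        List.getElem_of_eq hMAB.symm hi1
      rw [h1, h2, List.getElem_append_right (by omega : A.length ≤ i),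
        List.getElem_append_right (by omega : A.length ≤ i - 1)]
      have h3 : i - c = (i - 1 - c) + 1 := by omega
      simp_rw [← hc, h3]
      rw [List.getElem_cons_succ]
    · rw [List.getD_eq_default _ _ (not_lt.mp hiL), List.getD_eq_default _ _ (by omega)]

end aux

/- STATEMENT 4 (Claim 6.2, first case): If in a multiset V of nonnegative values we
replace one value v_j by a value v' with smp V ≤ v' < v_j, the static monopoly price
is unchanged. -/
theorem smp_replace_by_smaller_above_price
    (V₀ : Multiset ℝ) (vj v' : ℝ)
    (h0 : ∀ x ∈ V₀, (0 : ℝ) ≤ x) (hvj : 0 ≤ vj) (hv' : 0 ≤ v')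
    (hlow : smp (vj ::ₘ V₀) ≤ v') (hhigh : v' < vj) :
    smp (v' ::ₘ V₀) = smp (vj ::ₘ V₀) := by
  classical
  set M := V₀.sort (· ≥ ·) with hMdef
  have hMsorted : M.Pairwise (· ≥ ·) := V₀.pairwise_sort _
  have hM0 : ∀ a ∈ M, 0 ≤ a := fun a ha => h0 a ((V₀.mem_sort _).mp ha)
  have hins : ∀ x : ℝ, (x ::ₘ V₀).sort (· ≥ ·) = M.orderedInsert (· ≥ ·) x := by
    intro x
    apply List.Perm.eq_of_pairwise' (Multiset.pairwise_sort _ _)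
      (List.Pairwise.orderedInsert x M hMsorted)
    have h1 : List.Perm ((x ::ₘ V₀).sort (· ≥ ·)) (x :: M) := by
      rw [← Multiset.coe_eq_coe, Multiset.sort_eq, ← Multiset.cons_coe, hMdef, Multiset.sort_eq]
    exact h1.trans (List.perm_orderedInsert _ x M).symm
  set L := (vj ::ₘ V₀).sort (· ≥ ·) with hLdef
  set L' := (v' ::ₘ V₀).sort (· ≥ ·) with hL'def
  have hL : L = M.orderedInsert (· ≥ ·) vj := hins vj
  have hL' : L' = M.orderedInsert (· ≥ ·) v' := hins v'
  have hLlen : L.length = M.length + 1 := by rw [hL]; exact List.orderedInsert_length _ M vj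
  have hL'len : L'.length = M.length + 1 := by rw [hL']; exact List.orderedInsert_length _ M v'
  obtain ⟨hcle, hcgt, hMcle, hLlt, hLc, hLgt⟩ := ordIns_facts M vj hvj
  obtain ⟨hc'le, hc'gt, hMc'le, hL'lt, hL'c, hL'gt⟩ := ordIns_facts M v' hv'
  set c := (M.takeWhile fun b => ¬ vj ≥ b).length with hcdef
  set c' := (M.takeWhile fun b => ¬ v' ≥ b).length with hc'def
  rw [← hL] at hLlt hLc hLgt
  rw [← hL'] at hL'lt hL'c hL'gt
  have hcc' : c ≤ c' := by
    apply takeWhile_length_mono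
    intro a ha
    simp only [decide_eq_true_eq] at ha ⊢
    intro h; exact ha (le_trans h hhigh.le)
  have hMmono : ∀ {i j : ℕ}, i ≤ j → M.getD j 0 ≤ M.getD i 0 :=
    fun hij => sorted_getD_mono hMsorted hM0 hij
  -- pointwise inequality
  have hptwise : ∀ i, L'.getD i 0 ≤ L.getD i 0 := by
    intro i
    rcases lt_trichotomy i c with hic | rfl | hic
    · rw [hLlt i hic, hL'lt i (lt_of_lt_of_le hic hcc')]
    · rcases eq_or_lt_of_le hcc' with hcc | hcc
      · rw [hLc, hcc, hL'c]; exact hhigh.le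
      · rw [hLc, hL'lt _ hcc]; exact hMcle
    · rcases lt_trichotomy i c' with hic' | rfl | hic'
      · rw [hLgt i hic, hL'lt i hic']
        exact hMmono (by omega)
      · rw [hLgt _ hic, hL'c]
        exact (hc'gt (c' - 1) (by omega)).le
      · rw [hLgt i hic, hL'gt i hic']
  -- argmax for the original list
  have hsmpL : smp (vj ::ₘ V₀) = L.getD (((List.range L.length).reverse.argmax
      (fun i : ℕ => ((i : ℝ) + 1) * L.getD i 0)).getD 0) 0 := rfl
  set f : ℕ → ℝ := fun i => ((i : ℝ) + 1) * L.getD i 0 with hfdef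
  set f' : ℕ → ℝ := fun i => ((i : ℝ) + 1) * L'.getD i 0 with hf'def
  obtain ⟨k, hk⟩ : ∃ k, (List.range L.length).reverse.argmax f = some k := by
    cases h : (List.range L.length).reverse.argmax f with
    | none =>
      rw [List.argmax_eq_none] at h
      simp only [List.reverse_eq_nil_iff, List.range_eq_nil] at h
      omega
    | some k => exact ⟨k, rfl⟩
  have hkN : k < L.length := by
    have := List.argmax_mem hk
    simpa using this
  have hp : smp (vj ::ₘ V₀) = L.getD k 0 := by rw [hsmpL, hk]; rfl
  rw [hp] at hlow
  obtain ⟨hmax, htie⟩ := (argmax_revrange_eq_some_iff L.length f k hkN).mp hk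
  -- k > c and k > c'
  have hkc : c < k := by
    rcases lt_trichotomy k c with h | h | h
    · have h1 := hcgt k h
      have h2 := hLlt k h
      linarith [hlow, h2 ▸ hlow]
    · rw [h, hLc] at hlow; linarith
    · exact h
  have hkc' : c' < k := by
    by_contra hcon
    push_neg at hcon
    have h2 := hc'gt (k - 1) (by omega)
    have h3 := hLgt k hkc
    rw [h3] at hlow
    linarith
  have heqtail : ∀ i, k ≤ i → L'.getD i 0 = L.getD i 0 := by
    intro i hi
    rw [hLgt i (by omega), hL'gt i (by omega)]
  have hf'eq : ∀ i, k ≤ i → f' i = f i := by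
    intro i hi
    simp only [hfdef, hf'def, heqtail i hi]
  have hN' : L'.length = L.length := by omega
  have hk' : (List.range L'.length).reverse.argmax f' = some k := by
    rw [hN', argmax_revrange_eq_some_iff L.length f' k hkN]
    constructor
    · intro i hi
      rw [hf'eq k le_rfl]
      rcases le_or_gt k i with h | h
      · rw [hf'eq i h]; exact hmax i hi
      · calc f' i ≤ f i := by
              simp only [hfdef, hf'def]
              exact mul_le_mul_of_nonneg_left (hptwise i) (by positivity)
          _ ≤ f k := hmax i hi
    · intro i hi hfi
      rcases le_or_gt i k with h | h
      · exact h
      · apply htie i hi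
        rw [← hf'eq i h.le, ← hf'eq k le_rfl]
        exact hfi
  have hsmpL' : smp (v' ::ₘ V₀) = L'.getD (((List.range L'.length).reverse.argmax f').getD 0) 0 :=
    rfl
  rw [hsmpL', hk', hp]
  exact heqtail k le_rfl
end

section
/- Let V = {v_1 ≥ v_2 ≥ ... ≥ v_N} be a multiset of nonnegative values with static monopoly price p_V = v_k where k = argmax_i i·v_i. Let V' be the multiset obtained by adding a new value v' ≥ v_k to V and re-sorting. Then p_V ≤ p_{V'} ≤ v', i.e., the static monopoly price of the enlarged set lies between the original static monopoly price and the newly added value. -/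
open List in
private lemma idx_rev_range : ∀ {n m : ℕ}, m < n → ((List.range n).reverse).idxOf m = n - 1 - m := by
  intro n
  induction n with
  | zero => omega
  | succ n ih =>
    intro m h
    rw [List.range_succ, List.reverse_append, List.reverse_singleton, List.singleton_append]
    by_cases hm : m = n
    · subst hm; rw [List.idxOf_cons_self]; omega
    · rw [List.idxOf_cons_ne _ (Ne.symm hm), ih (by omega)]; omega

open List in
private lemma argmaxRev_spec {n : ℕ} (hn : 0 < n) (f : ℕ → ℝ) :
    ∃ m, ((List.range n).reverse).argmax f = some m ∧ m < n ∧
      (∀ i, i < n → f i ≤ f m) ∧ (∀ i, i < n → m < i → f i < f m) := by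
  obtain ⟨m, hm⟩ : ∃ m, argmax f (range n).reverse = some m := by
    cases h : argmax f (range n).reverse with
    | none => rw [argmax_eq_none] at h; simp only [List.reverse_eq_nil_iff, List.range_eq_nil] at h; omega
    | some m => exact ⟨m, rfl⟩
  rw [argmax_eq_some_iff] at hm
  obtain ⟨hmem, hle, hidx⟩ := hm
  have hmn : m < n := by simpa using hmem
  refine ⟨m, by rw [argmax_eq_some_iff]; exact ⟨hmem, hle, hidx⟩, hmn, ?_, ?_⟩
  · intro i hi; exact hle i (by simpa using hi)
  · intro i hi hmi
    by_contra hc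
    push_neg at hc
    have := hidx i (by simpa using hi) hc
    rw [idx_rev_range hmn, idx_rev_range hi] at this
    omega

private lemma getD_anti {l : List ℝ} (hs : l.Pairwise (· ≥ ·)) (h0 : ∀ x ∈ l, 0 ≤ x)
    {i j : ℕ} (hij : i ≤ j) : l.getD j 0 ≤ l.getD i 0 := by
  by_cases hj : j < l.length
  · have hi : i < l.length := lt_of_le_of_lt hij hj
    rw [List.getD_eq_getElem _ _ hj, List.getD_eq_getElem _ _ hi]
    exact hs.rel_get_of_le (a := ⟨i, hi⟩) (b := ⟨j, hj⟩) (by exact hij)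
  · rw [List.getD_eq_default _ _ (le_of_not_gt hj)]
    by_cases hi : i < l.length
    · rw [List.getD_eq_getElem _ _ hi]; exact h0 _ (List.getElem_mem _)
    · rw [List.getD_eq_default _ _ (le_of_not_gt hi)]



/- STATEMENT 6 (Claim 6.3): Adding a new value v' ≥ smp V to a multiset V of
nonnegative values yields a static monopoly price between smp V and v'. -/
theorem smp_insert_between
    (V : Multiset ℝ) (v' : ℝ)
    (h0 : ∀ x ∈ V, (0 : ℝ) ≤ x) (hne : V ≠ 0)
    (hv' : smp V ≤ v') :
    smp V ≤ smp (v' ::ₘ V) ∧ smp (v' ::ₘ V) ≤ v' := by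
  classical
  set l := V.sort (· ≥ ·) with hldef
  have hls : l.Pairwise (· ≥ ·) := V.pairwise_sort _
  have hlnn : ∀ x ∈ l, (0:ℝ) ≤ x := fun x hx => h0 x (by rwa [Multiset.mem_sort] at hx)
  have hn : 0 < l.length := by
    rw [hldef, Multiset.length_sort]
    exact Multiset.card_pos.2 hne
  set n := l.length with hndef
  obtain ⟨k, hk, hkn, hkmax, hkstr⟩ := argmaxRev_spec hn (fun i : ℕ => ((i:ℝ)+1) * l.getD i 0)
  have hsmpV : smp V = l.getD k 0 := by
    show l.getD (((List.range n).reverse.argmax (fun i : ℕ => ((i:ℝ)+1) * l.getD i 0)).getD 0) 0 = _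
    rw [hk]
    rfl
  set l' := (v' ::ₘ V).sort (· ≥ ·) with hl'def
  have hl's : l'.Pairwise (· ≥ ·) := (v' ::ₘ V).pairwise_sort _
  have hknn : (0:ℝ) ≤ l.getD k 0 := by
    rw [List.getD_eq_getElem _ _ hkn]; exact hlnn _ (List.getElem_mem _)
  have hl'nn : ∀ x ∈ l', (0:ℝ) ≤ x := by
    intro x hx
    rw [Multiset.mem_sort, Multiset.mem_cons] at hx
    rcases hx with rfl | hx
    · exact le_trans hknn (hsmpV ▸ hv')
    · exact h0 x hx
  -- identify l' with ordered insertion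
  have hl'eq : l' = List.orderedInsert (· ≥ ·) v' l := by
    refine List.Perm.eq_of_pairwise' hl's (hls.orderedInsert v' l) ?_
    have hc : (l' : Multiset ℝ) = ((v' :: l : List ℝ) : Multiset ℝ) := by
      rw [hl'def, Multiset.sort_eq, ← Multiset.cons_coe, hldef, Multiset.sort_eq]
    exact (Quotient.exact hc).trans (l.perm_orderedInsert (· ≥ ·) v').symm
  have hl'' : l' = (l.takeWhile fun b => ¬ v' ≥ b) ++ v' :: (l.dropWhile fun b => ¬ v' ≥ b) := by
    rw [hl'eq]; exact List.orderedInsert_eq_take_drop _ v' l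
  set t := (l.takeWhile fun b : ℝ => ¬ v' ≥ b) with htdef
  set d := (l.dropWhile fun b : ℝ => ¬ v' ≥ b) with hddef
  have htd : t ++ d = l := List.takeWhile_append_dropWhile
  set j := t.length with hjdef
  have hjn : j ≤ n := by
    rw [hjdef, hndef, ← htd]; simp
  have hlen' : l'.length = n + 1 := by
    rw [hl'eq, List.orderedInsert_length]
  -- getD facts
  have hlow : ∀ i, i < j → l'.getD i 0 = l.getD i 0 := by
    intro i hi
    rw [hl'', List.getD_append _ _ _ _ hi, ← htd, List.getD_append _ _ _ _ hi]
  have hmid : l'.getD j 0 = v' := by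
    rw [hl'', List.getD_append_right _ _ _ _ (le_refl j), Nat.sub_self]
    rfl
  have hhigh : ∀ i, j < i → l'.getD i 0 = l.getD (i-1) 0 := by
    intro i hi
    rw [hl'', List.getD_append_right _ _ _ _ (le_of_lt hi), ← htd,
      List.getD_append_right _ _ _ _ (by omega : t.length ≤ i - 1)]
    have : i - j = (i - 1 - t.length) + 1 := by omega
    rw [this]
    rfl
  -- j ≤ k
  have hjk : j ≤ k := by
    by_contra hc
    push_neg at hc
    have hmem : l.getD k 0 ∈ t := by
      have hkt : k < t.length := hc
      rw [← htd, List.getD_append _ _ _ _ hkt, List.getD_eq_getElem _ _ hkt]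
      exact List.getElem_mem _
    have := List.mem_takeWhile_imp hmem
    simp only [decide_eq_true_eq] at this
    exact this (hsmpV ▸ hv')
  -- argmax for l'
  obtain ⟨k', hk', hk'n, hk'max, hk'str⟩ :=
    argmaxRev_spec (by omega : 0 < l'.length) (fun i : ℕ => ((i:ℝ)+1) * l'.getD i 0)
  have hsmpV' : smp (v' ::ₘ V) = l'.getD k' 0 := by
    show l'.getD (((List.range l'.length).reverse.argmax
      (fun i : ℕ => ((i:ℝ)+1) * l'.getD i 0)).getD 0) 0 = _
    rw [hk']
    rfl
  have e2 : l'.getD (k+1) 0 = l.getD k 0 := by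
    rw [hhigh (k+1) (by omega)]; congr 1
  -- k' ≤ k + 1
  have hk'le : k' ≤ k + 1 := by
    by_contra hc
    push_neg at hc
    have hk'n' : k' < n + 1 := by omega
    have e1 : l'.getD k' 0 = l.getD (k'-1) 0 := hhigh k' (by omega)
    have h1 : ((↑(k'-1):ℝ)+1) * l.getD (k'-1) 0 < ((k:ℝ)+1) * l.getD k 0 :=
      hkstr (k'-1) (by omega) (by omega)
    have h2 : l.getD (k'-1) 0 ≤ l.getD k 0 := getD_anti hls hlnn (by omega : k ≤ k'-1)
    have h3 : ((↑(k+1):ℝ)+1) * l'.getD (k+1) 0 ≤ ((k':ℝ)+1) * l'.getD k' 0 :=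
      hk'max (k+1) (by omega)
    rw [e1] at h3
    rw [e2] at h3
    have hcast : ((↑(k'-1):ℝ)+1) = (k':ℝ) := by
      have : k' - 1 + 1 = k' := by omega
      rw [← this]; push_cast; ring
    rw [hcast] at h1
    push_cast at h3
    nlinarith [h1, h2, h3]
  -- j ≤ k'
  have hjk' : j ≤ k' := by
    by_contra hc
    push_neg at hc
    have e1 : l'.getD k' 0 = l.getD k' 0 := hlow k' hc
    have h1 : ((↑(k+1):ℝ)+1) * l'.getD (k+1) 0 < ((k':ℝ)+1) * l'.getD k' 0 :=
      hk'str (k+1) (by omega) (by omega)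
    have h2 : ((k':ℝ)+1) * l.getD k' 0 ≤ ((k:ℝ)+1) * l.getD k 0 := hkmax k' (by omega)
    rw [e1, e2] at h1
    push_cast at h1
    nlinarith [h1, h2, hknn]
  constructor
  · rw [hsmpV, hsmpV', ← e2]
    exact getD_anti hl's hl'nn hk'le
  · rw [hsmpV', ← hmid]
    exact getD_anti hl's hl'nn hjk'
end

section
/- Let w_1 > w_2 > ... > w_M > 0 be distinct valuations with multiplicities n_1,...,n_M ≥ 1 satisfying the condition: for all 1 ≤ i < j ≤ M, w_i ≥ (1 + n_{i+1} + ... + n_j)·w_j (with w_i = n_i = 0 for i > M). For T ≥ 1 and 1 ≤ k ≤ M, define Π(k) = (Σ_{i=1}^k n_i)·w_k + Σ_{j=k+1}^{T+k-1} n_j·w_j. Then Π(1) ≥ Π(k) for all k = 1,...,M. -/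
/- STATEMENT 8: Under the Pacman condition, with T ≥ 1 periods, the revenue
Π(k) = (Σ_{i=1}^k n i) * w k + Σ_{j=k+1}^{T+k-1} n j * w j of first charging w k and
then descending is maximized at k = 1. -/
theorem pacman_first_price_optimal
    (M : ℕ) (w : ℕ → ℝ) (n : ℕ → ℕ)
    (hM : 1 ≤ M)
    (hpos : ∀ i, 1 ≤ i → i ≤ M → 0 < w i)
    (hstrict : ∀ i j, 1 ≤ i → i < j → j ≤ M → w j < w i)
    (hn : ∀ i, 1 ≤ i → i ≤ M → 1 ≤ n i)
    (hw0 : ∀ i, M < i → w i = 0)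
    (hn0 : ∀ i, M < i → n i = 0)
    (hcond : ∀ i j, 1 ≤ i → i < j → j ≤ M →
      (1 + (∑ l ∈ Finset.Icc (i + 1) j, (n l : ℝ))) * w j ≤ w i)
    (T : ℕ) (hT : 1 ≤ T) :
    ∀ k, 1 ≤ k → k ≤ M →
      (∑ i ∈ Finset.Icc 1 k, (n i : ℝ)) * w k +
          ∑ j ∈ Finset.Icc (k + 1) (T + k - 1), (n j : ℝ) * w j
        ≤ (∑ i ∈ Finset.Icc 1 1, (n i : ℝ)) * w 1 +
            ∑ j ∈ Finset.Icc 2 (T + 1 - 1), (n j : ℝ) * w j := by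
  have wnn : ∀ j, 1 ≤ j → 0 ≤ w j := by
    intro j hj
    by_cases h : j ≤ M
    · exact (hpos j hj h).le
    · exact le_of_eq (hw0 j (lt_of_not_ge h)).symm
  have step : ∀ j, 1 ≤ j → (n (j + 1) : ℝ) * w (j + 1) ≤ w j - w (j + 1) := by
    intro j hj
    by_cases h : j + 1 ≤ M
    · have hc := hcond j (j + 1) hj (Nat.lt_succ_self j) h
      rw [Finset.Icc_self, Finset.sum_singleton] at hc
      have hw := (hpos (j + 1) (by omega) h).le
      nlinarith
    · have h1 : w (j + 1) = 0 := hw0 _ (by omega)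
      rw [h1]
      simpa using wnn j hj
  have tele : ∀ a, 1 ≤ a → ∀ b, a ≤ b →
      ∑ j ∈ Finset.Ioc a b, (n j : ℝ) * w j ≤ w a - w b := by
    intro a ha b hb
    induction b, hb using Nat.le_induction with
    | base => simp
    | succ b hab ih =>
      rw [Finset.sum_Ioc_succ_top hab]
      have := step b (le_trans ha hab)
      linarith
  intro k hk1 hkM
  rcases eq_or_lt_of_le hk1 with h1 | hk2
  · subst h1
    exact le_rfl
  · have hk2' : 2 ≤ k := hk2
    have hM2 : 2 ≤ M := le_trans hk2 hkM
    have eT : T + 1 - 1 = T := by omega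
    have eIcc1 : Finset.Icc 1 k = Finset.Ioc 0 k := Finset.Icc_add_one_left_eq_Ioc 0 k
    have eIcc2 : Finset.Icc 2 T = Finset.Ioc 1 T := Finset.Icc_add_one_left_eq_Ioc 1 T
    have eIcck : Finset.Icc (k + 1) (T + k - 1) = Finset.Ioc k (T + k - 1) :=
      Finset.Icc_add_one_left_eq_Ioc k (T + k - 1)
    rw [eT, eIcc1, eIcc2, eIcck]
    have eRHS : (∑ i ∈ Finset.Icc 1 1, (n i : ℝ)) = (n 1 : ℝ) := by simp
    rw [eRHS]
    -- Part A : (∑ i ∈ Ioc 0 k, n i) * w k ≤ n 1 * w 1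
    have hA : (∑ i ∈ Finset.Ioc 0 k, (n i : ℝ)) * w k ≤ (n 1 : ℝ) * w 1 := by
      have hsplit : (∑ i ∈ Finset.Ioc 0 1, (n i : ℝ)) + ∑ i ∈ Finset.Ioc 1 k, (n i : ℝ)
          = ∑ i ∈ Finset.Ioc 0 k, (n i : ℝ) :=
        Finset.sum_Ioc_consecutive _ (by omega) hk1
      have h01 : (∑ i ∈ Finset.Ioc 0 1, (n i : ℝ)) = (n 1 : ℝ) := by simp
      have hc := hcond 1 k le_rfl hk2 hkM
      rw [Finset.Icc_add_one_left_eq_Ioc 1 k] at hc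
      have hwk1 : w k < w 1 := hstrict 1 k le_rfl hk2 hkM
      have hwk : 0 ≤ w k := wnn k hk1
      have hn1 : (1 : ℝ) ≤ (n 1 : ℝ) := by exact_mod_cast hn 1 le_rfl hM
      have hS : (0 : ℝ) ≤ ∑ i ∈ Finset.Ioc 1 k, (n i : ℝ) := by positivity
      nlinarith [mul_le_mul_of_nonneg_left hwk1.le (by linarith : (0:ℝ) ≤ (n 1 : ℝ) - 1)]
    -- Part B : tail sum ≤ ∑ j ∈ Ioc 1 T
    have hB : (∑ j ∈ Finset.Ioc k (T + k - 1), (n j : ℝ) * w j)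
        ≤ ∑ j ∈ Finset.Ioc 1 T, (n j : ℝ) * w j := by
      by_cases hT1 : T = 1
      · subst hT1
        simp [show 1 + k - 1 = k from by omega]
      · have hT2 : 2 ≤ T := by omega
        have h1 := tele k hk1 (T + k - 1) (by omega)
        have h2 : 0 ≤ w (T + k - 1) := wnn _ (by omega)
        have h3 : w k ≤ w 2 := by
          rcases eq_or_lt_of_le hk2' with h | h
          · rw [← h]
          · exact (hstrict 2 k (by omega) h hkM).le
        have hn2 : (1 : ℝ) ≤ (n 2 : ℝ) := by exact_mod_cast hn 2 (by omega) hM2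
        have hw2 : 0 ≤ w 2 := wnn 2 (by omega)
        have h4 : w 2 ≤ (n 2 : ℝ) * w 2 := by nlinarith
        have h5 : (n 2 : ℝ) * w 2 ≤ ∑ j ∈ Finset.Ioc 1 T, (n j : ℝ) * w j := by
          apply Finset.single_le_sum (f := fun j => (n j : ℝ) * w j)
          · intro i hi
            have : 1 ≤ i := by
              have := (Finset.mem_Ioc.mp hi).1; omega
            exact mul_nonneg (by positivity) (wnn i this)
          · simp only [Finset.mem_Ioc]; omega
        linarith
    linarith
end

section
/- Let w_1 > ... > w_M > 0 be distinct valuations with multiplicities n_1,...,n_M ≥ 1 such that every tail static monopoly price equals the top remaining value (for all 1 ≤ i < j ≤ M: w_i ≥ (1 + n_{i+1} + ... + n_j)·w_j). Then the static monopoly revenue n_1·w_1 is at least half of the total consumer surplus Σ_{i=1}^M n_i·w_i. -/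
/- STATEMENT 9: Under the Pacman condition, the static monopoly revenue n 1 * w 1 is at
least half the total consumer surplus Σ_{i=1}^M n i * w i. -/
theorem static_monopoly_revenue_ge_half_surplus
    (M : ℕ) (w : ℕ → ℝ) (n : ℕ → ℕ)
    (hM : 1 ≤ M)
    (hpos : ∀ i, 1 ≤ i → i ≤ M → 0 < w i)
    (hstrict : ∀ i j, 1 ≤ i → i < j → j ≤ M → w j < w i)
    (hn : ∀ i, 1 ≤ i → i ≤ M → 1 ≤ n i)
    (hw0 : ∀ i, M < i → w i = 0)
    (hn0 : ∀ i, M < i → n i = 0)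
    (hcond : ∀ i j, 1 ≤ i → i < j → j ≤ M →
      (1 + (∑ l ∈ Finset.Icc (i + 1) j, (n l : ℝ))) * w j ≤ w i) :
    (1 / 2) * ∑ i ∈ Finset.Icc 1 M, (n i : ℝ) * w i ≤ (n 1 : ℝ) * w 1 := by
  have key : ∀ d i, 1 ≤ i → i ≤ M → M - i ≤ d →
      ∑ j ∈ Finset.Icc (i + 1) M, (n j : ℝ) * w j ≤ w i := by
    intro d
    induction d with
    | zero =>
      intro i h1 h2 h3
      have hiM : i = M := by omega
      subst hiM
      rw [Finset.Icc_eq_empty (by omega)]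
      simpa using (hpos i h1 h2).le
    | succ d ih =>
      intro i h1 h2 h3
      by_cases hiM : i = M
      · subst hiM
        rw [Finset.Icc_eq_empty (by omega)]
        simpa using (hpos i h1 h2).le
      · have hlt : i + 1 ≤ M := by omega
        have hins : Finset.Icc (i + 1) M = insert (i + 1) (Finset.Icc (i + 2) M) := by
          ext x; simp [Finset.mem_Icc]; omega
        rw [hins, Finset.sum_insert (by simp [Finset.mem_Icc])]
        have htail : ∑ j ∈ Finset.Icc (i + 2) M, (n j : ℝ) * w j ≤ w (i + 1) :=
          ih (i + 1) (by omega) hlt (by omega)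
        have hc := hcond i (i + 1) h1 (by omega) hlt
        rw [Finset.Icc_self, Finset.sum_singleton] at hc
        linarith
  have hsplit : Finset.Icc 1 M = insert 1 (Finset.Icc 2 M) := by
    ext x; simp [Finset.mem_Icc]; omega
  rw [hsplit, Finset.sum_insert (by simp [Finset.mem_Icc])]
  have htail : ∑ j ∈ Finset.Icc 2 M, (n j : ℝ) * w j ≤ w 1 := key M 1 le_rfl hM (by omega)
  have hw1 : 0 < w 1 := hpos 1 le_rfl hM
  have hn1 : (1 : ℝ) ≤ (n 1 : ℝ) := by exact_mod_cast hn 1 le_rfl hM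
  nlinarith
end

section
/- Consider a two-period duropoly with k consumers of value v_H and n−k consumers of value v_L = v_H/(n−k+1), where 1 ≤ k < n. The static monopoly revenue is Π^M = k·v_H, and the revenue k·v_H + (n−k)·v_L obtained by selling to the high-value consumers at v_H in period 1 and the low-value consumers at v_L in period 2 equals Π^M + (1 − 1/(n−k+1))·v_H. In particular, when k = 1, this revenue tends to 2·Π^M as n → ∞. -/
/- STATEMENT 11: Two-period duropoly with k consumers of value v_H and n − k consumers
of value v_L = v_H / (n − k + 1), 1 ≤ k < n. The static monopoly revenue is
Π^M = max (k * v_H) (n * v_L) = k * v_H, the revenue k * v_H + (n − k) * v_L from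
selling high-value consumers at v_H in period 1 and low-value ones at v_L in period 2
equals Π^M + (1 − 1/(n − k + 1)) * v_H, and for k = 1 this revenue tends to
2 * Π^M = 2 * v_H as n → ∞. -/
theorem tight_example_two_periods
    (vH : ℝ) (hvH : 0 < vH) (k : ℕ) (hk : 1 ≤ k) :
    (∀ n : ℕ, k < n →
      max ((k : ℝ) * vH) ((n : ℝ) * (vH / ((n : ℝ) - (k : ℝ) + 1))) = (k : ℝ) * vH ∧
      (k : ℝ) * vH + ((n : ℝ) - (k : ℝ)) * (vH / ((n : ℝ) - (k : ℝ) + 1))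
        = (k : ℝ) * vH + (1 - 1 / ((n : ℝ) - (k : ℝ) + 1)) * vH) ∧
    Filter.Tendsto
      (fun n : ℕ => (1 : ℝ) * vH + ((n : ℝ) - 1) * (vH / ((n : ℝ) - 1 + 1)))
      Filter.atTop (nhds (2 * ((1 : ℝ) * vH))) := by
  constructor
  · intro n hn
    have hkn : (k : ℝ) < (n : ℝ) := by exact_mod_cast hn
    have hk1 : (1 : ℝ) ≤ (k : ℝ) := by exact_mod_cast hk
    have hd : (0 : ℝ) < (n : ℝ) - (k : ℝ) + 1 := by linarith
    constructor
    · apply max_eq_left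
      rw [mul_div_assoc', div_le_iff₀ hd]
      nlinarith [mul_nonneg (mul_nonneg (sub_nonneg.2 hk1) (sub_nonneg.2 hkn.le)) hvH.le]
    · field_simp
      ring
  · have h1 : Filter.Tendsto (fun n : ℕ => ((n : ℝ) - 1) / ((n : ℝ) - 1 + 1))
        Filter.atTop (nhds 1) := by
      have : (fun n : ℕ => ((n : ℝ) - 1) / ((n : ℝ) - 1 + 1))
          =ᶠ[Filter.atTop] (fun n : ℕ => 1 - 1 / (n : ℝ)) := by
        filter_upwards [Filter.eventually_gt_atTop 0] with n hn
        have hn' : (0 : ℝ) < (n : ℝ) := by exact_mod_cast hn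
        field_simp
        rw [sub_add_cancel, mul_div_cancel_left₀ _ hn'.ne']
      rw [Filter.tendsto_congr' this]
      have := tendsto_one_div_atTop_nhds_zero_nat (𝕜 := ℝ)
      have h := Filter.Tendsto.const_sub (1 : ℝ) this
      simpa using h
    have h2 : Filter.Tendsto (fun n : ℕ => (1:ℝ) * vH + (((n : ℝ) - 1) / ((n : ℝ) - 1 + 1)) * vH)
        Filter.atTop (nhds ((1:ℝ) * vH + 1 * vH)) :=
      Filter.Tendsto.const_add _ (h1.mul_const vH)
    have heq : (fun n : ℕ => (1:ℝ) * vH + (((n : ℝ) - 1) / ((n : ℝ) - 1 + 1)) * vH)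
        = (fun n : ℕ => (1 : ℝ) * vH + ((n : ℝ) - 1) * (vH / ((n : ℝ) - 1 + 1))) := by
      funext n; ring
    rw [heq] at h2
    convert h2 using 2
    ring
end

section
/- Let v_1 ≥ ... ≥ v_N ≥ 0 with tail static monopoly prices p_i = v_{y_i}, y_i = argmax_{j≥i} (j-i+1)·v_j. Then for every m with 1 ≤ m ≤ N: (y_m − m + 1)·v_{y_m} + Σ_{i=1}^{m-1} p_i ≤ Σ_{i=1}^{N} p_i. -/
lemma key_tail_rev (N : ℕ) (v : ℕ → ℝ) (y : ℕ → ℕ)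
    (hnonneg : ∀ i, 1 ≤ i → i ≤ N → 0 ≤ v i)
    (hy : ∀ i, 1 ≤ i → i ≤ N → i ≤ y i ∧ y i ≤ N ∧
      ∀ j, i ≤ j → j ≤ N → ((j : ℝ) - i + 1) * v j ≤ ((y i : ℝ) - i + 1) * v (y i)) :
    ∀ k m, 1 ≤ m → m ≤ N → N - m ≤ k →
      ((y m : ℝ) - m + 1) * v (y m) ≤ ∑ i ∈ Finset.Icc m N, v (y i) := by
  intro k
  induction k with
  | zero =>
      intro m hm1 hmN hk
      have hmN' : m = N := by omega
      subst hmN'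
      obtain ⟨h1, h2, _⟩ := hy m hm1 le_rfl
      have hym : y m = m := by omega
      simp [hym]
  | succ k ih =>
      intro m hm1 hmN hk
      by_cases hcase : m = N
      · subst hcase
        obtain ⟨h1, h2, _⟩ := hy m hm1 le_rfl
        have hym : y m = m := by omega
        simp [hym]
      · have hmN' : m + 1 ≤ N := by omega
        have hsplit : Finset.Icc m N = insert m (Finset.Icc (m+1) N) := by
          ext a; simp [Finset.mem_Icc]; omega
        have hnot : m ∉ Finset.Icc (m+1) N := by simp
        rw [hsplit, Finset.sum_insert hnot]
        obtain ⟨hy1, hy2, hy3⟩ := hy m hm1 (le_of_lt (by omega))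
        have ihS := ih (m+1) (by omega) hmN' (by omega)
        have hSnn : (0:ℝ) ≤ ∑ i ∈ Finset.Icc (m+1) N, v (y i) := by
          apply Finset.sum_nonneg
          intro i hi
          rw [Finset.mem_Icc] at hi
          obtain ⟨hi1, hi2, _⟩ := hy i (by omega) hi.2
          exact hnonneg (y i) (by omega) hi2
        by_cases hym : y m = m
        · rw [hym]
          have : ((m:ℝ) - m + 1) * v m = v m := by ring
          rw [this]
          linarith
        · have hym' : m + 1 ≤ y m := by omega
          obtain ⟨hz1, hz2, hz3⟩ := hy (m+1) (by omega) hmN'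
          have h1 : ((y m : ℝ) - (m+1) + 1) * v (y m)
              ≤ ((y (m+1) : ℝ) - (m+1) + 1) * v (y (m+1)) := by
            have := hz3 (y m) hym' hy2
            push_cast at this ⊢
            linarith
          have h2 : ((y (m+1) : ℝ) - (m+1) + 1) * v (y (m+1))
              ≤ ∑ i ∈ Finset.Icc (m+1) N, v (y i) := by
            have : ((m:ℝ)+1) = ((m+1 : ℕ) : ℝ) := by push_cast; ring
            calc ((y (m+1) : ℝ) - (m+1) + 1) * v (y (m+1))
                = ((y (m+1) : ℝ) - ((m+1:ℕ):ℝ) + 1) * v (y (m+1)) := by push_cast; ring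
              _ ≤ _ := ihS
          have : ((y m : ℝ) - m + 1) * v (y m)
              = v (y m) + ((y m : ℝ) - (m+1) + 1) * v (y m) := by ring
          rw [this]
          linarith

/- STATEMENT 13: With `v 1 ≥ ... ≥ v N ≥ 0` and tail static monopoly prices
`p i = v (y i)`, for every `1 ≤ m ≤ N`, the static monopoly revenue of the tail
`{m, ..., N}`, namely `(y m - m + 1) * v (y m)`, plus the prices of the first `m - 1`
consumers, is at most the sum of all tail prices. -/
theorem tail_revenue_add_prefix_prices_le_sum_prices
    (N : ℕ) (v : ℕ → ℝ) (y : ℕ → ℕ)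
    (hN : 1 ≤ N)
    (hmono : ∀ i j, 1 ≤ i → i ≤ j → j ≤ N → v j ≤ v i)
    (hnonneg : ∀ i, 1 ≤ i → i ≤ N → 0 ≤ v i)
    (hy : ∀ i, 1 ≤ i → i ≤ N → i ≤ y i ∧ y i ≤ N ∧
      ∀ j, i ≤ j → j ≤ N → ((j : ℝ) - i + 1) * v j ≤ ((y i : ℝ) - i + 1) * v (y i)) :
    ∀ m, 1 ≤ m → m ≤ N →
      ((y m : ℝ) - m + 1) * v (y m) + ∑ i ∈ Finset.Icc 1 (m - 1), v (y i)
        ≤ ∑ i ∈ Finset.Icc 1 N, v (y i) := by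
  intro m hm1 hmN
  have hkey := key_tail_rev N v y hnonneg hy (N - m) m hm1 hmN le_rfl
  have hsplit : Finset.Icc 1 N = Finset.Icc 1 (m-1) ∪ Finset.Icc m N := by
    ext a; simp [Finset.mem_Icc]; omega
  have hdisj : Disjoint (Finset.Icc 1 (m-1)) (Finset.Icc m N) := by
    rw [Finset.disjoint_left]
    intro a ha hb
    rw [Finset.mem_Icc] at ha hb
    omega
  rw [hsplit, Finset.sum_union hdisj]
  linarith
end

section
/- Let v_1 ≥ ... ≥ v_N ≥ 0 with M distinct values among them, and suppose for every i the static monopoly price of the tail {i,...,N} equals v_i. If w_1 > ... > w_M are the distinct values, then w_{j+1} ≤ w_j/2 for all j = 1,...,M−1; consequently consumer valuations decrease at least geometrically with ratio 1/2 across distinct value classes. -/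
/- STATEMENT 14: If every tail static monopoly price equals the top remaining value,
i.e. `v (y i) = v i` for all `i`, then any strictly smaller valuation is at most half
of a larger one: distinct value classes decrease at least geometrically with ratio 1/2. -/
theorem valuations_halve_of_pacman_condition
    (N : ℕ) (v : ℕ → ℝ) (y : ℕ → ℕ)
    (hN : 1 ≤ N)
    (hmono : ∀ i j, 1 ≤ i → i ≤ j → j ≤ N → v j ≤ v i)
    (hnonneg : ∀ i, 1 ≤ i → i ≤ N → 0 ≤ v i)
    (hy : ∀ i, 1 ≤ i → i ≤ N → i ≤ y i ∧ y i ≤ N ∧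
      ∀ j, i ≤ j → j ≤ N → ((j : ℝ) - i + 1) * v j ≤ ((y i : ℝ) - i + 1) * v (y i))
    (hprice : ∀ i, 1 ≤ i → i ≤ N → v (y i) = v i) :
    ∀ i j, 1 ≤ i → i ≤ N → 1 ≤ j → j ≤ N → v j < v i → v j ≤ v i / 2 := by
  classical
  intro i j hi hiN hj hjN hlt
  -- k := greatest index ≤ N with v k = v i
  set P : ℕ → Prop := fun m => i ≤ m ∧ v m = v i with hP
  have hPi : P i := ⟨le_rfl, rfl⟩
  set k := Nat.findGreatest P N with hk
  have hkP : P k := Nat.findGreatest_spec hiN hPi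
  have hik : i ≤ k := hkP.1
  have hvk : v k = v i := hkP.2
  have hkN : k ≤ N := Nat.findGreatest_le N
  have hk1 : 1 ≤ k := le_trans hi hik
  -- j > k
  have hkj : k < j := by
    by_contra h
    push_neg at h
    have := hmono j k hj h hkN
    rw [hvk] at this
    exact absurd this (not_le.mpr hlt)
  have hk1N : k + 1 ≤ N := le_trans hkj hjN
  -- y k = k
  obtain ⟨hky, hyN, hopt⟩ := hy k hk1 hkN
  have hvyk : v (y k) = v i := by rw [hprice k hk1 hkN, hvk]
  have hyk : y k = k := by
    by_contra h
    have hlt' : k < y k := lt_of_le_of_ne hky (Ne.symm h)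
    exact Nat.findGreatest_is_greatest hlt' hyN ⟨le_trans hik (le_of_lt hlt'), hvyk⟩
  -- optimality at k+1
  have h2 := hopt (k + 1) (Nat.le_succ k) hk1N
  rw [hyk, hvk] at h2
  push_cast at h2
  have hvj : v j ≤ v (k + 1) := hmono (k + 1) j (le_trans hk1 (Nat.le_succ k)) hkj hjN
  nlinarith [hvj, h2]
end

section
/- Let v_1 ≥ ... ≥ v_N ≥ 0. The condition 'the static monopoly price of the tail {i,...,N} equals v_i for every i' holds if and only if for every nonempty subset S ⊆ {1,...,N}, the static monopoly price of the game restricted to the consumers in S equals the maximum value in S. -/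
/-- Static monopoly price of a finite multiset of valuations: sort the values in
non-increasing order as `u 1 ≥ u 2 ≥ ...` and return `u k` where `k` maximizes the
revenue `i * u i`, with ties broken in favor of the smallest index (in particular in
favor of the single top consumer). -/
noncomputable def smpFirst (s : Multiset ℝ) : ℝ :=
  let l := s.sort (· ≥ ·)
  l.getD (((List.range l.length).argmax
    (fun i : ℕ => ((i : ℝ) + 1) * l.getD i 0)).getD 0) 0

lemma sort_coe (l : List ℝ) (hl : l.Pairwise (· ≥ ·)) :
    Multiset.sort (↑l) (· ≥ ·) = l :=
  List.Perm.eq_of_pairwise' (Multiset.pairwise_sort _ _) hl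
    (Multiset.coe_eq_coe.mp (Multiset.sort_eq _ _))

lemma smp_coe (l : List ℝ) (hl : l.Pairwise (· ≥ ·)) :
    smpFirst ↑l = l.getD (((List.range l.length).argmax
      (fun i : ℕ => ((i : ℝ) + 1) * l.getD i 0)).getD 0) 0 := by
  unfold smpFirst
  rw [sort_coe l hl]

lemma indexOf_range {n k : ℕ} (hk : k < n) : (List.range n).idxOf k = k := by
  have h := (List.nodup_range (n := n)).idxOf_getElem k (by simpa using hk)
  simpa using h

lemma smp_eq_head (l : List ℝ) (hl : l.Pairwise (· ≥ ·)) (a : ℝ)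
    (m : ℕ) (hm : m < l.length)
    (hma : ∀ j ≤ m, l.getD j 0 = a)
    (hub : ∀ k < l.length, ((k:ℝ)+1) * l.getD k 0 ≤ ((m:ℝ)+1) * a) :
    smpFirst ↑l = a := by
  set f : ℕ → ℝ := fun i : ℕ => ((i : ℝ) + 1) * l.getD i 0 with hf
  obtain ⟨k, hk⟩ : ∃ k, (List.range l.length).argmax f = some k := by
    cases h : (List.range l.length).argmax f with
    | none =>
      rw [List.argmax_eq_none, List.range_eq_nil] at h; omega
    | some k => exact ⟨k, rfl⟩
  have hkmem : k ∈ List.range l.length := List.argmax_mem hk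
  have hklt : k < l.length := List.mem_range.mp hkmem
  have hmmem : m ∈ List.range l.length := List.mem_range.mpr hm
  have hfm : f m = ((m:ℝ)+1) * a := by show ((m:ℝ)+1) * l.getD m 0 = ((m:ℝ)+1) * a; rw [hma m le_rfl]
  have hle : f k ≤ f m := by rw [hfm]; exact hub k hklt
  have hidx : (List.range l.length).idxOf k ≤ (List.range l.length).idxOf m :=
    List.index_of_argmax hk hmmem hle
  rw [indexOf_range hklt, indexOf_range hm] at hidx
  rw [smp_coe l hl, hk]
  exact hma k hidx

lemma smp_extract (l : List ℝ) (hl : l.Pairwise (· ≥ ·)) (hne : 0 < l.length)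
    (h0 : smpFirst ↑l = l.getD 0 0) (h00 : 0 ≤ l.getD 0 0) (m : ℕ)
    (hm : ∀ t < l.length, l.getD t 0 = l.getD 0 0 → t ≤ m) :
    ∀ k, k < l.length → ((k:ℝ)+1) * l.getD k 0 ≤ ((m:ℝ)+1) * l.getD 0 0 := by
  set f : ℕ → ℝ := fun i : ℕ => ((i : ℝ) + 1) * l.getD i 0 with hf
  obtain ⟨K, hK⟩ : ∃ K, (List.range l.length).argmax f = some K := by
    cases h : (List.range l.length).argmax f with
    | none => rw [List.argmax_eq_none, List.range_eq_nil] at h; omega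
    | some K => exact ⟨K, rfl⟩
  have hKlt : K < l.length := List.mem_range.mp (List.argmax_mem hK)
  have hKval : l.getD K 0 = l.getD 0 0 := by
    rw [smp_coe l hl, hK] at h0; exact h0
  have hKm : K ≤ m := hm K hKlt hKval
  intro k hk
  have h1 : f k ≤ f K := List.le_of_mem_argmax (List.mem_range.mpr hk) hK
  have h2 : f K = ((K:ℝ)+1) * l.getD 0 0 := by show ((K:ℝ)+1) * l.getD K 0 = ((K:ℝ)+1) * l.getD 0 0; rw [hKval]
  calc ((k:ℝ)+1) * l.getD k 0 ≤ ((K:ℝ)+1) * l.getD 0 0 := by rw [← h2]; exact h1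
    _ ≤ ((m:ℝ)+1) * l.getD 0 0 := by
        apply mul_le_mul_of_nonneg_right _ h00
        have : (K:ℝ) ≤ m := Nat.cast_le.mpr hKm
        linarith

section helpers
variable (N : ℕ) (v : ℕ → ℝ)
  (hmono : ∀ i j, 1 ≤ i → i ≤ j → j ≤ N → v j ≤ v i)

-- L2
lemma coe_map_sort (S : Finset ℕ) :
    S.val.map v = ↑((S.sort (· ≤ ·)).map v) := by
  conv_lhs => rw [← Finset.sort_eq S (· ≤ ·)]
  exact Multiset.map_coe v _

-- L3
lemma getD_map_sort (S : Finset ℕ) (t : ℕ) (ht : t < (S.sort (· ≤ ·)).length) :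
    ((S.sort (· ≤ ·)).map v).getD t 0 = v ((S.sort (· ≤ ·)).getD t 0) := by
  rw [List.getD_eq_getElem (l := (S.sort (· ≤ ·)).map v) _ (by simpa using ht),
    List.getD_eq_getElem _ _ ht]
  simp

-- L1
include hmono in
lemma map_sort_sorted (S : Finset ℕ) (hsub : S ⊆ Finset.Icc 1 N) :
    ((S.sort (· ≤ ·)).map v).Pairwise (· ≥ ·) := by
  have hs := List.pairwise_iff_get.mp ((Finset.sortedLT_sort S).pairwise)
  refine List.pairwise_map.mpr (List.pairwise_iff_get.mpr ?_)
  intro i j hij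
  have hi : (S.sort (· ≤ ·)).get i ∈ Finset.Icc 1 N :=
    hsub ((Finset.mem_sort _).mp (List.get_mem _ _))
  have hj : (S.sort (· ≤ ·)).get j ∈ Finset.Icc 1 N :=
    hsub ((Finset.mem_sort _).mp (List.get_mem _ _))
  rw [Finset.mem_Icc] at hi hj
  exact hmono _ _ hi.1 (le_of_lt (hs i j hij)) hj.2

end helpers

lemma sorted_lt_getD {l : List ℕ} (hl : l.Pairwise (· < ·)) {i j : ℕ}
    (hij : i ≤ j) (hj : j < l.length) :
    l.getD i 0 + (j - i) ≤ l.getD j 0 := by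
  have H : ∀ (a b : ℕ) (hb : b < l.length), a < b → l.getD a 0 < l.getD b 0 := by
    intro a b hb hab
    rw [List.getD_eq_getElem _ _ (lt_trans hab hb), List.getD_eq_getElem _ _ hb]
    exact List.pairwise_iff_get.mp hl ⟨a, lt_trans hab hb⟩ ⟨b, hb⟩ hab
  induction j with
  | zero => interval_cases i; simp
  | succ n ih =>
    rcases eq_or_lt_of_le hij with rfl | h
    · simp
    · have hn : n < l.length := lt_trans (Nat.lt_succ_self n) hj
      have h1 := ih (Nat.lt_succ_iff.mp h) hn
      have h2 := H n (n+1) hj (Nat.lt_succ_self n)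
      omega

-- sort of Icc e N is [e, e+1, ..., N]
lemma getD_sort_Icc (e N : ℕ) (heN : e ≤ N) (t : ℕ)
    (ht : t < ((Finset.Icc e N).sort (· ≤ ·)).length) :
    ((Finset.Icc e N).sort (· ≤ ·)).getD t 0 = e + t := by
  have hs := (Finset.sortedLT_sort (Finset.Icc e N)).pairwise
  have hlen : ((Finset.Icc e N).sort (· ≤ ·)).length = N + 1 - e := by
    rw [Finset.length_sort, Nat.card_Icc]
  have hmem : ∀ s, s < ((Finset.Icc e N).sort (· ≤ ·)).length →
      e ≤ ((Finset.Icc e N).sort (· ≤ ·)).getD s 0 ∧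
        ((Finset.Icc e N).sort (· ≤ ·)).getD s 0 ≤ N := by
    intro s hs'
    rw [List.getD_eq_getElem _ _ hs']
    have := (Finset.mem_sort (α := ℕ) (· ≤ ·)).mp
      (List.getElem_mem (l := (Finset.Icc e N).sort (· ≤ ·)) hs')
    rwa [Finset.mem_Icc] at this
  obtain ⟨t0, ht0l, ht0⟩ : ∃ t0, t0 < ((Finset.Icc e N).sort (· ≤ ·)).length ∧
      ((Finset.Icc e N).sort (· ≤ ·)).getD t0 0 = e := by
    obtain ⟨i, hi, hie⟩ := List.mem_iff_getElem.mp
      ((Finset.mem_sort (α := ℕ) (· ≤ ·)).mpr (Finset.mem_Icc.mpr ⟨le_rfl, heN⟩))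
    exact ⟨i, hi, by rw [List.getD_eq_getElem _ _ hi, hie]⟩
  have h1 := sorted_lt_getD hs (Nat.zero_le t0) ht0l
  have h2 := hmem 0 (by omega)
  have h3 := sorted_lt_getD hs (Nat.zero_le t) ht
  have h4 := sorted_lt_getD hs (show t ≤ ((Finset.Icc e N).sort (· ≤ ·)).length - 1 by omega)
    (show ((Finset.Icc e N).sort (· ≤ ·)).length - 1 <
      ((Finset.Icc e N).sort (· ≤ ·)).length by omega)
  have h5 := hmem (((Finset.Icc e N).sort (· ≤ ·)).length - 1) (by omega)
  omega

-- Lemma B: the tail condition at an index e which is the last of its value-block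
lemma tail_ineq (N : ℕ) (v : ℕ → ℝ)
    (hmono : ∀ i j, 1 ≤ i → i ≤ j → j ≤ N → v j ≤ v i)
    (htail : ∀ i, 1 ≤ i → i ≤ N → smpFirst ((Finset.Icc i N).val.map v) = v i)
    (hnonneg : ∀ i, 1 ≤ i → i ≤ N → 0 ≤ v i)
    (e j : ℕ) (he : 1 ≤ e) (hej : e ≤ j) (hjN : j ≤ N)
    (hlast : ∀ t, e < t → t ≤ N → v t ≠ v e) :
    (((j - e : ℕ) : ℝ) + 1) * v j ≤ v e := by
  have heN : e ≤ N := le_trans hej hjN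
  have hlen : ((Finset.Icc e N).sort (· ≤ ·)).length = N + 1 - e := by
    rw [Finset.length_sort, Nat.card_Icc]
  have hllen : (((Finset.Icc e N).sort (· ≤ ·)).map v).length = N + 1 - e := by
    rw [List.length_map, hlen]
  have hsub : Finset.Icc e N ⊆ Finset.Icc 1 N := Finset.Icc_subset_Icc he le_rfl
  have hsorted : (((Finset.Icc e N).sort (· ≤ ·)).map v).Pairwise (· ≥ ·) :=
    map_sort_sorted N v hmono _ hsub
  have hgetD : ∀ t, t < (((Finset.Icc e N).sort (· ≤ ·)).map v).length →
      (((Finset.Icc e N).sort (· ≤ ·)).map v).getD t 0 = v (e + t) := by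
    intro t htl
    rw [getD_map_sort, getD_sort_Icc e N heN t (by omega)]
    omega
  have hg0 : (((Finset.Icc e N).sort (· ≤ ·)).map v).getD 0 0 = v e := by
    rw [hgetD 0 (by omega)]
    norm_num
  have h0 : smpFirst ↑(((Finset.Icc e N).sort (· ≤ ·)).map v) =
      (((Finset.Icc e N).sort (· ≤ ·)).map v).getD 0 0 := by
    rw [hg0, ← coe_map_sort, htail e he heN]
  have hext := smp_extract _ hsorted (by omega) h0 (hg0 ▸ hnonneg e he heN) 0 ?_
  · have hk : j - e < (((Finset.Icc e N).sort (· ≤ ·)).map v).length := by omega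
    have hh := hext (j - e) hk
    rw [hgetD (j - e) hk, hg0] at hh
    have hje : e + (j - e) = j := by omega
    rw [hje] at hh
    push_cast at hh ⊢
    linarith
  · intro t htl htv
    by_contra hc
    have ht1 : 0 < t := by omega
    rw [hgetD t htl, hg0] at htv
    exact hlast (e + t) (by omega) (by omega) htv

lemma sorted_getD_le {l : List ℝ} (hl : l.Pairwise (· ≥ ·)) {i j : ℕ}
    (hij : i ≤ j) (hj : j < l.length) : l.getD j 0 ≤ l.getD i 0 := by
  rcases eq_or_lt_of_le hij with rfl | h
  · exact le_refl _
  · have := List.pairwise_iff_get.mp hl ⟨i, lt_of_le_of_lt hij hj⟩ ⟨j, hj⟩ h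
    rw [List.getD_eq_getElem _ _ hj, List.getD_eq_getElem _ _ (lt_of_le_of_lt hij hj)]
    exact this

lemma subset_smp (N : ℕ) (v : ℕ → ℝ)
    (hmono : ∀ i j, 1 ≤ i → i ≤ j → j ≤ N → v j ≤ v i)
    (hnonneg : ∀ i, 1 ≤ i → i ≤ N → 0 ≤ v i)
    (htail : ∀ i, 1 ≤ i → i ≤ N → smpFirst ((Finset.Icc i N).val.map v) = v i)
    (S : Finset ℕ) (hsub : S ⊆ Finset.Icc 1 N) (hS : S.Nonempty) :
    smpFirst (S.val.map v) = S.sup' hS v := by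
  classical
  have hcoe : S.val.map v = ↑((S.sort (· ≤ ·)).map v) := coe_map_sort v S
  have hsorted : ((S.sort (· ≤ ·)).map v).Pairwise (· ≥ ·) := map_sort_sorted N v hmono S hsub
  have hsortlt : (S.sort (· ≤ ·)).Pairwise (· < ·) := (Finset.sortedLT_sort S).pairwise
  have hlen : (S.sort (· ≤ ·)).length = S.card := Finset.length_sort _
  have hlenmap : ((S.sort (· ≤ ·)).map v).length = (S.sort (· ≤ ·)).length :=
    List.length_map _
  have hgetD : ∀ t, t < (S.sort (· ≤ ·)).length →
      ((S.sort (· ≤ ·)).map v).getD t 0 = v ((S.sort (· ≤ ·)).getD t 0) :=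
    fun t ht => getD_map_sort v S t ht
  have hmemS : ∀ t, t < (S.sort (· ≤ ·)).length → (S.sort (· ≤ ·)).getD t 0 ∈ S := by
    intro t ht
    rw [List.getD_eq_getElem _ _ ht]
    exact (Finset.mem_sort _).mp (List.getElem_mem ht)
  have hidx : ∀ b ∈ S, ∃ t, t < (S.sort (· ≤ ·)).length ∧ (S.sort (· ≤ ·)).getD t 0 = b := by
    intro b hb
    obtain ⟨i, hi, hie⟩ := List.mem_iff_getElem.mp ((Finset.mem_sort (α := ℕ) (· ≤ ·)).mpr hb)
    exact ⟨i, hi, by rw [List.getD_eq_getElem _ _ hi, hie]⟩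
  have hcard : 0 < S.card := Finset.card_pos.mpr hS
  -- from now on, work with the abstract list
  set Ls := S.sort (· ≤ ·) with hLs
  set L := Ls.map v with hLdef
  have hn : 0 < Ls.length := by omega
  set a := L.getD 0 0 with hadef
  have h0mem : Ls.getD 0 0 ∈ S := hmemS 0 hn
  have h0Icc := Finset.mem_Icc.mp (hsub h0mem)
  have ha0 : a = v (Ls.getD 0 0) := hgetD 0 hn
  have hanneg : 0 ≤ a := ha0 ▸ hnonneg _ h0Icc.1 h0Icc.2
  -- the top of the list is the sup'
  have hsup : S.sup' hS v = a := by
    apply le_antisymm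
    · apply Finset.sup'_le
      intro b hb
      obtain ⟨t, ht, rfl⟩ := hidx b hb
      rw [← hgetD t ht]
      exact le_of_le_of_eq (sorted_getD_le hsorted (Nat.zero_le t) (by omega)) hadef.symm
    · exact ha0 ▸ Finset.le_sup' v h0mem
  -- the block of top values in L
  have hA0 : (0 : ℕ) ∈ (Finset.range Ls.length).filter (fun k => L.getD k 0 = a) := by
    simp only [Finset.mem_filter, Finset.mem_range]
    exact ⟨hn, rfl⟩
  set A := (Finset.range Ls.length).filter (fun k => L.getD k 0 = a) with hAdef
  set m := A.max' ⟨0, hA0⟩ with hmdef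
  have hmA : m ∈ A := A.max'_mem _
  have hmlt : m < Ls.length := by
    have := Finset.mem_filter.mp hmA
    exact Finset.mem_range.mp this.1
  have hmval : L.getD m 0 = a := (Finset.mem_filter.mp hmA).2
  have hmax : ∀ k, k < Ls.length → L.getD k 0 = a → k ≤ m := by
    intro k hk hka
    exact A.le_max' k (Finset.mem_filter.mpr ⟨Finset.mem_range.mpr hk, hka⟩)
  have hma : ∀ j, j ≤ m → L.getD j 0 = a := by
    intro j hj
    apply le_antisymm
    · exact hadef ▸ sorted_getD_le hsorted (Nat.zero_le j) (by omega)
    · exact hmval ▸ sorted_getD_le hsorted hj (by omega)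
  -- the last index in [1,N] carrying the top value
  have hE0 : Ls.getD 0 0 ∈ (Finset.Icc 1 N).filter (fun t => v t = a) :=
    Finset.mem_filter.mpr ⟨hsub h0mem, ha0.symm⟩
  set E := (Finset.Icc 1 N).filter (fun t => v t = a) with hEdef
  set e := E.max' ⟨_, hE0⟩ with hedef
  have heE := Finset.mem_filter.mp (E.max'_mem ⟨_, hE0⟩)
  have heIcc := Finset.mem_Icc.mp heE.1
  have heval : v e = a := heE.2
  have hlaste : ∀ t, e < t → t ≤ N → v t ≠ v e := by
    intro t het htN hteq
    have : t ∈ E := Finset.mem_filter.mpr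
      ⟨Finset.mem_Icc.mpr ⟨by omega, htN⟩, by rw [hteq, heval]⟩
    have := E.le_max' t this
    omega
  -- the key inequality
  have hub : ∀ k, k < L.length → ((k:ℝ)+1) * L.getD k 0 ≤ ((m:ℝ)+1) * a := by
    intro k hk
    have hkLs : k < Ls.length := by omega
    by_cases hka : L.getD k 0 = a
    · have hkm : k ≤ m := hmax k hkLs hka
      rw [hka]
      have : (k:ℝ) ≤ (m:ℝ) := Nat.cast_le.mpr hkm
      nlinarith
    · have hkm : m < k := by
        by_contra h
        exact hka (hma k (by omega))
      have hm1 : m + 1 < Ls.length := by omega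
      have hgt : ∀ t, m < t → t < Ls.length → e < Ls.getD t 0 := by
        intro t hmt ht
        by_contra h
        push_neg at h
        have htmem := Finset.mem_Icc.mp (hsub (hmemS t ht))
        have h1 : v e ≤ v (Ls.getD t 0) := hmono _ e htmem.1 h heIcc.2
        have h2 : L.getD t 0 ≤ a := hadef ▸ sorted_getD_le hsorted (Nat.zero_le t) (by omega)
        have h3 : L.getD t 0 = a := le_antisymm h2 (by rw [hgetD t ht]; rw [heval] at h1; exact h1)
        exact absurd (hmax t ht h3) (by omega)
      have h1 : e < Ls.getD (m+1) 0 := hgt (m+1) (by omega) hm1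
      have h2 := sorted_lt_getD hsortlt (show m+1 ≤ k by omega) hkLs
      have hkmem := Finset.mem_Icc.mp (hsub (hmemS k hkLs))
      have h3 := tail_ineq N v hmono htail hnonneg e (Ls.getD k 0)
        heIcc.1 (by omega) hkmem.2 hlaste
      rw [heval] at h3
      have h4 : 0 ≤ v (Ls.getD k 0) := hnonneg _ hkmem.1 hkmem.2
      have h5 : (((k - m : ℕ):ℝ) + 1) * v (Ls.getD k 0) ≤ a := by
        refine le_trans (mul_le_mul_of_nonneg_right ?_ h4) h3
        have : k - m ≤ Ls.getD k 0 - e := by omega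
        have := Nat.cast_le (α := ℝ).mpr this
        linarith
      have h6 : v (Ls.getD k 0) ≤ a := by
        rw [← hgetD k hkLs]
        exact hadef ▸ sorted_getD_le hsorted (Nat.zero_le k) (by omega)
      rw [hgetD k hkLs]
      have hcast : ((k - m : ℕ):ℝ) = (k:ℝ) - (m:ℝ) := by
        push_cast [Nat.cast_sub (le_of_lt hkm)]
        ring
      rw [hcast] at h5
      have hm0 : (0:ℝ) ≤ (m:ℝ) := Nat.cast_nonneg m
      nlinarith [mul_le_mul_of_nonneg_left h6 hm0]
  rw [hcoe, hsup]
  exact smp_eq_head L hsorted a m (by omega) hma (by intro k hk; exact hub k hk)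


/- STATEMENT 15 (Lemma 4.1): For valuations v 1 ≥ ... ≥ v N ≥ 0, the static monopoly
price of every tail {i, ..., N} equals v i if and only if for every nonempty subset S
of consumers, the static monopoly price of the restriction to S equals the maximum
valuation in S. -/
theorem tail_price_eq_top_iff_subset_price_eq_top
    (N : ℕ) (v : ℕ → ℝ)
    (hN : 1 ≤ N)
    (hmono : ∀ i j, 1 ≤ i → i ≤ j → j ≤ N → v j ≤ v i)
    (hnonneg : ∀ i, 1 ≤ i → i ≤ N → 0 ≤ v i) :
    (∀ i, 1 ≤ i → i ≤ N → smpFirst ((Finset.Icc i N).val.map v) = v i) ↔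
      (∀ S : Finset ℕ, S ⊆ Finset.Icc 1 N → ∀ hS : S.Nonempty,
        smpFirst (S.val.map v) = S.sup' hS v) := by
  constructor
  · intro htail S hsub hS
    exact subset_smp N v hmono hnonneg htail S hsub hS
  · intro h i h1 hi
    have hne : (Finset.Icc i N).Nonempty := ⟨i, Finset.mem_Icc.mpr ⟨le_rfl, hi⟩⟩
    rw [h (Finset.Icc i N) (Finset.Icc_subset_Icc h1 le_rfl) hne]
    apply le_antisymm
    · apply Finset.sup'_le
      intro b hb
      have hb' := Finset.mem_Icc.mp hb
      exact hmono i b h1 hb'.1 hb'.2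
    · exact Finset.le_sup' v (Finset.mem_Icc.mpr ⟨le_rfl, hi⟩)
end

section
/- Let S be a finite multiset of nonnegative values with static monopoly price p(S), and let u, w be values with u ≥ w > p(S). Let p(S ∪ {w}) ≤ w. Then p(S ∪ {u}) ≥ p(S ∪ {w}). -/
open List

lemma my_sort_insert (S : Multiset ℝ) (a : ℝ) :
    Multiset.sort (a ::ₘ S) (· ≥ ·) =
      List.orderedInsert (· ≥ ·) a (Multiset.sort S (· ≥ ·)) := by
  refine (fun hp h1 h2 => List.Perm.eq_of_pairwise' (r := (· ≥ ·)) h1 h2 hp) ?_ ?_ ?_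
  · have h1 : (Multiset.sort (a ::ₘ S) (· ≥ ·) : Multiset ℝ) = a ::ₘ S := Multiset.sort_eq _ _
    have h2 : (Multiset.sort S (· ≥ ·) : Multiset ℝ) = S := Multiset.sort_eq _ _
    have : List.orderedInsert (· ≥ ·) a (Multiset.sort S (· ≥ ·)) ~ a :: Multiset.sort S (· ≥ ·) :=
      List.perm_orderedInsert _ _ _
    refine Perm.trans ?_ this.symm
    rw [← Multiset.coe_eq_coe]
    rw [← Multiset.cons_coe, h2]; exact h1
  · exact Multiset.pairwise_sort _ _
  · exact List.Pairwise.orderedInsert a _ (Multiset.pairwise_sort _ _)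

lemma takeWhile_len_mono {p q : ℝ → Bool} (h : ∀ x, p x → q x) :
    ∀ l : List ℝ, (l.takeWhile p).length ≤ (l.takeWhile q).length := by
  intro l
  induction l with
  | nil => simp
  | cons b l ih =>
    by_cases hb : p b
    · simp [List.takeWhile_cons, hb, h b hb]; omega
    · simp [List.takeWhile_cons, hb]

lemma ins_length (l : List ℝ) (j : ℕ) (a : ℝ) (hj : j ≤ l.length) :
    (l.take j ++ a :: l.drop j).length = l.length + 1 := by
  simp [List.length_take, List.length_drop]; omega

lemma ins_getD_lt (l : List ℝ) (j : ℕ) (a : ℝ) (hj : j ≤ l.length) {i : ℕ} (hi : i < j) :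
    (l.take j ++ a :: l.drop j).getD i 0 = l.getD i 0 := by
  have h1 : i < (l.take j).length := by simp [List.length_take]; omega
  have h2 : i < l.length := by omega
  rw [List.getD_eq_getElem _ _ (by rw [ins_length l j a hj]; omega),
    List.getElem_append_left h1, List.getElem_take, List.getD_eq_getElem _ _ h2]

lemma ins_getD_self (l : List ℝ) (j : ℕ) (a : ℝ) (hj : j ≤ l.length) :
    (l.take j ++ a :: l.drop j).getD j 0 = a := by
  have h1 : (l.take j).length = j := by simp [List.length_take]; omega
  rw [List.getD_eq_getElem _ _ (by rw [ins_length l j a hj]; omega),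
    List.getElem_append_right (by omega)]
  simp [h1]

lemma ins_getD_gt (l : List ℝ) (j : ℕ) (a : ℝ) (hj : j ≤ l.length) {i : ℕ} (hi : j < i) :
    (l.take j ++ a :: l.drop j).getD i 0 = l.getD (i - 1) 0 := by
  have h1 : (l.take j).length = j := by simp [List.length_take]; omega
  by_cases hle : i < l.length + 1
  · rw [List.getD_eq_getElem _ _ (by rw [ins_length l j a hj]; omega),
      List.getElem_append_right (by omega)]
    have h2 : i - j ≠ 0 := by omega
    rw [List.getElem_cons]
    simp only [h2, dif_neg, h1]
    rw [dif_neg not_false, List.getElem_drop]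
    rw [List.getD_eq_getElem _ _ (by omega)]
    congr 1
    omega
  · rw [List.getD_eq_default _ _ (by rw [ins_length l j a hj]; omega),
      List.getD_eq_default _ _ (by omega)]

lemma rev_range_indexOf {N i : ℕ} (hi : i < N) :
    ((List.range N).reverse).idxOf i = N - 1 - i := by
  have hmem : i ∈ (List.range N).reverse := by simp [hi]
  have hlt : ((List.range N).reverse).idxOf i < N := by
    have := List.idxOf_lt_length_iff.2 hmem
    simpa using this
  have := List.getElem_idxOf (xs := (List.range N).reverse) (x := i)
    (by simpa using hlt)
  rw [List.getElem_reverse, List.getElem_range] at this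
  simp only [List.length_reverse, List.length_range] at this
  omega

lemma argmax_rev_range_spec (N : ℕ) (hN : 0 < N) (f : ℕ → ℝ) :
    ∃ k, ((List.range N).reverse.argmax f) = some k ∧ k < N ∧
      (∀ i < N, f i ≤ f k) ∧ (∀ i < N, f k ≤ f i → i ≤ k) := by
  have hne : (List.range N).reverse ≠ [] := by simp; omega
  obtain ⟨k, hk⟩ : ∃ k, (List.range N).reverse.argmax f = some k := by
    cases h : (List.range N).reverse.argmax f with
    | none => exact absurd (List.argmax_eq_none.1 h) hne
    | some k => exact ⟨k, rfl⟩
  have hkmem : k ∈ (List.range N).reverse := List.argmax_mem hk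
  have hkN : k < N := by simpa using hkmem
  refine ⟨k, hk, hkN, ?_, ?_⟩
  · intro i hi
    exact List.le_of_mem_argmax (by simp [hi]) hk
  · intro i hi hfi
    have := List.index_of_argmax hk (a := i) (by simp [hi]) hfi
    rw [rev_range_indexOf hkN, rev_range_indexOf hi] at this
    omega

lemma ordIns (a : ℝ) : ∀ (l : List ℝ),
    ∃ j, j ≤ l.length ∧ List.orderedInsert (· ≥ ·) a l = l.take j ++ a :: l.drop j ∧
      (∀ i, i < j → a < l.getD i 0) ∧ (j < l.length → l.getD j 0 ≤ a)
  | [] => ⟨0, by simp [List.orderedInsert]⟩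
  | b :: t => by
    by_cases hab : a ≥ b
    · refine ⟨0, by simp, ?_, by omega, ?_⟩
      · simp [List.orderedInsert, hab]
      · intro _; simpa using hab
    · obtain ⟨j, hj, heq, h3, h4⟩ := ordIns a t
      refine ⟨j + 1, by simpa using hj, ?_, ?_, ?_⟩
      · simp [List.orderedInsert, hab, heq]
      · intro i hi
        cases i with
        | zero => simpa using lt_of_not_ge hab
        | succ i => simpa using h3 i (by omega)
      · intro h
        simpa using h4 (by simpa using h)

lemma sorted_getD_le_s17 (m : List ℝ) (hm : m.Pairwise (· ≥ ·)) {i k : ℕ} (hik : i ≤ k)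
    (hk : k < m.length) : m.getD k 0 ≤ m.getD i 0 := by
  rw [List.getD_eq_getElem _ _ hk, List.getD_eq_getElem _ _ (lt_of_le_of_lt hik hk)]
  rcases eq_or_lt_of_le hik with h | h
  · subst h; exact le_refl _
  · have := hm.rel_get_of_lt (a := ⟨i, lt_of_le_of_lt hik hk⟩) (b := ⟨k, hk⟩) h
    simpa [List.get_eq_getElem] using this



/- STATEMENT 17 (Claims 6.2 + 6.3, case (b) of Lemma 6.6): For a multiset S of
nonnegative values and u ≥ w > smp S with smp (w ::ₘ S) ≤ w, raising the added value
from w to u cannot decrease the static monopoly price. -/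
theorem smp_insert_monotone_above_price
    (S : Multiset ℝ) (u w : ℝ)
    (h0 : ∀ x ∈ S, (0 : ℝ) ≤ x)
    (huw : w ≤ u) (hw : smp S < w)
    (hws : smp (w ::ₘ S) ≤ w) :
    smp (w ::ₘ S) ≤ smp (u ::ₘ S) := by
  classical
  obtain ⟨jw, hjw, hweq, hw3, hw4⟩ := ordIns w (Multiset.sort S (· ≥ ·))
  obtain ⟨ju, hju, hueq, hu3, hu4⟩ := ordIns u (Multiset.sort S (· ≥ ·))
  set l : List ℝ := Multiset.sort S (· ≥ ·) with hldef
  set n : ℕ := l.length with hndef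
  have hlw : Multiset.sort (w ::ₘ S) (· ≥ ·) = l.take jw ++ w :: l.drop jw :=
    (my_sort_insert S w).trans hweq
  have hlu : Multiset.sort (u ::ₘ S) (· ≥ ·) = l.take ju ++ u :: l.drop ju :=
    (my_sort_insert S u).trans hueq
  have hlwlen : (Multiset.sort (w ::ₘ S) (· ≥ ·)).length = n + 1 := by
    rw [hlw]; exact ins_length l jw w hjw
  have hlulen : (Multiset.sort (u ::ₘ S) (· ≥ ·)).length = n + 1 := by
    rw [hlu]; exact ins_length l ju u hju
  -- ju ≤ jw
  have hjuw : ju ≤ jw := by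
    by_contra h
    push_neg at h
    have h1 : jw < n := lt_of_lt_of_le h hju
    have h2 := hw4 h1
    have h3 := hu3 jw h
    linarith
  -- getD values of the two inserted lists
  have wlt : ∀ i, i < jw → w < (Multiset.sort (w ::ₘ S) (· ≥ ·)).getD i 0 := by
    intro i hi
    rw [hlw, ins_getD_lt l jw w hjw hi]
    exact hw3 i hi
  have wself : (Multiset.sort (w ::ₘ S) (· ≥ ·)).getD jw 0 = w := by
    rw [hlw]; exact ins_getD_self l jw w hjw
  have wgt : ∀ i, jw < i → (Multiset.sort (w ::ₘ S) (· ≥ ·)).getD i 0 = l.getD (i - 1) 0 := by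
    intro i hi
    rw [hlw]; exact ins_getD_gt l jw w hjw hi
  have ugt : ∀ i, ju < i → (Multiset.sort (u ::ₘ S) (· ≥ ·)).getD i 0 = l.getD (i - 1) 0 := by
    intro i hi
    rw [hlu]; exact ins_getD_gt l ju u hju hi
  -- lu values ≥ w on [0, jw]
  have ulow : ∀ i, i ≤ jw → w ≤ (Multiset.sort (u ::ₘ S) (· ≥ ·)).getD i 0 := by
    intro i hi
    rcases lt_trichotomy i ju with h | h | h
    · rw [hlu, ins_getD_lt l ju u hju h]
      exact le_trans huw (le_of_lt (hu3 i h))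
    · rw [h, hlu, ins_getD_self l ju u hju]; exact huw
    · rw [ugt i h]
      exact le_of_lt (hw3 (i - 1) (by omega))
  -- lu ≥ lw pointwise on [jw, ∞)
  have udom : ∀ i, jw ≤ i →
      (Multiset.sort (w ::ₘ S) (· ≥ ·)).getD i 0 ≤ (Multiset.sort (u ::ₘ S) (· ≥ ·)).getD i 0 := by
    intro i hi
    rcases eq_or_lt_of_le hi with h | h
    · subst h; rw [wself]; exact ulow jw le_rfl
    · rw [wgt i h, ugt i (lt_of_le_of_lt hjuw h)]
  -- the argmax indices
  obtain ⟨kw, hkw, hkwlt, maxw, tiew⟩ := argmax_rev_range_spec (n + 1) (by omega)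
    (fun i : ℕ => ((i : ℝ) + 1) * (Multiset.sort (w ::ₘ S) (· ≥ ·)).getD i 0)
  obtain ⟨ku, hku, hkult, maxu, tieu⟩ := argmax_rev_range_spec (n + 1) (by omega)
    (fun i : ℕ => ((i : ℝ) + 1) * (Multiset.sort (u ::ₘ S) (· ≥ ·)).getD i 0)
  have smpw : smp (w ::ₘ S) = (Multiset.sort (w ::ₘ S) (· ≥ ·)).getD kw 0 := by
    simp only [smp]
    rw [hlwlen, hkw, Option.getD_some]
  have smpu : smp (u ::ₘ S) = (Multiset.sort (u ::ₘ S) (· ≥ ·)).getD ku 0 := by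
    simp only [smp]
    rw [hlulen, hku, Option.getD_some]
  rw [smpw] at hws ⊢
  rw [smpu]
  -- kw ≥ jw
  have hkwjw : jw ≤ kw := by
    by_contra h
    push_neg at h
    exact absurd hws (not_le_of_gt (wlt kw h))
  by_contra hcon
  push_neg at hcon
  -- ku > jw
  have hkujw : jw < ku := by
    by_contra h
    push_neg at h
    have := ulow ku h
    linarith
  -- equal values at ku
  have heqku : (Multiset.sort (w ::ₘ S) (· ≥ ·)).getD ku 0
      = (Multiset.sort (u ::ₘ S) (· ≥ ·)).getD ku 0 := by
    rw [wgt ku hkujw, ugt ku (lt_of_le_of_lt hjuw hkujw)]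
  -- revenue comparison
  have hkw1 : (0:ℝ) < (kw : ℝ) + 1 := by positivity
  have r1 : ((kw : ℝ) + 1) * (Multiset.sort (w ::ₘ S) (· ≥ ·)).getD kw 0
      ≤ ((kw : ℝ) + 1) * (Multiset.sort (u ::ₘ S) (· ≥ ·)).getD kw 0 :=
    mul_le_mul_of_nonneg_left (udom kw hkwjw) (le_of_lt hkw1)
  have r2 := maxu kw hkwlt
  have r3 : ((kw : ℝ) + 1) * (Multiset.sort (w ::ₘ S) (· ≥ ·)).getD kw 0
      ≤ ((ku : ℝ) + 1) * (Multiset.sort (w ::ₘ S) (· ≥ ·)).getD ku 0 := by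
    rw [heqku]
    exact le_trans r1 r2
  have hkukw : ku ≤ kw := tiew ku hkult r3
  -- sortedness contradiction
  have hsort : (Multiset.sort (u ::ₘ S) (· ≥ ·)).Pairwise (· ≥ ·) := Multiset.pairwise_sort _ _
  have h9 : (Multiset.sort (u ::ₘ S) (· ≥ ·)).getD kw 0
      ≤ (Multiset.sort (u ::ₘ S) (· ≥ ·)).getD ku 0 := by
    exact sorted_getD_le_s17 _ hsort hkukw (by omega)
  have h10 := udom kw hkwjw
  linarith
end

section
/- Let v_1 ≥ v_2 ≥ ... ≥ v_N ≥ 0 and define threat prices recursively for a T-period horizon: τ(i, T−1) = p_i (the static monopoly price of the tail {i,...,N}), and for t < T−1, τ(i,t) = p(i, t+1) where p(i,t) is defined by the recursion p(i,t) = p(j*(i,t), t+1) with j*(i,t) = argmax_{j ≥ i} ((j−i+1)·p(j, t+1) + Π(j+1, t+1)), Π(i,t) = (j*(i,t)−i+1)·p(j*(i,t), t+1) + Π(j*(i,t)+1, t+1), base case p(i,T) = p_i and Π(i, T+1) = 0. Then threat prices are non-increasing in the consumer index: τ(i,t) ≥ τ(k,t) whenever i ≤ k, for all t < T. -/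
/- STATEMENT 19 (Lemma 3.2): Valuations v 1 ≥ ... ≥ v N ≥ 0, with tail static monopoly
argmaxes `y i` (so `p_i = v (y i)`). The equilibrium price function `P i t`, profit
function `Pi i t` and cutoff consumer `J i t` satisfy the backward recursion: base cases
`P i T = v (y i)`, `Pi i T = (y i − i + 1) * v (y i)`, `Pi i (T+1) = 0`, `Pi i t = 0` for
empty subgames `i > N`; and for 1 ≤ t < T the index `J i t` is the (largest) maximizer of
`(j − i + 1) * P j (t+1) + Pi (j+1) (t+1)` over `i ≤ j ≤ N`, with
`P i t = P (J i t) (t+1)` and `Pi i t = (J i t − i + 1) * P (J i t) (t+1) + Pi (J i t + 1) (t+1)`.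
Then the threat prices τ(i, t) = P i (t+1) are non-increasing in the consumer index:
`P k (t+1) ≤ P i (t+1)` whenever `i ≤ k` and `1 ≤ t < T`. -/
theorem threat_prices_nonincreasing_in_consumer
    (N T : ℕ) (v : ℕ → ℝ) (y : ℕ → ℕ)
    (P Pi : ℕ → ℕ → ℝ) (J : ℕ → ℕ → ℕ)
    (hN : 1 ≤ N) (hT : 1 ≤ T)
    (hmono : ∀ i j, 1 ≤ i → i ≤ j → j ≤ N → v j ≤ v i)
    (hnonneg : ∀ i, 1 ≤ i → i ≤ N → 0 ≤ v i)
    (hy : ∀ i, 1 ≤ i → i ≤ N → i ≤ y i ∧ y i ≤ N ∧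
      ∀ j, i ≤ j → j ≤ N → ((j : ℝ) - i + 1) * v j ≤ ((y i : ℝ) - i + 1) * v (y i))
    (hPbase : ∀ i, 1 ≤ i → i ≤ N → P i T = v (y i))
    (hPibase : ∀ i, 1 ≤ i → i ≤ N → Pi i T = ((y i : ℝ) - i + 1) * v (y i))
    (hPiend : ∀ i, Pi i (T + 1) = 0)
    (hPiempty : ∀ i t, N < i → Pi i t = 0)
    (hJrange : ∀ i t, 1 ≤ i → i ≤ N → 1 ≤ t → t < T → i ≤ J i t ∧ J i t ≤ N)
    (hJmax : ∀ i t, 1 ≤ i → i ≤ N → 1 ≤ t → t < T → ∀ j, i ≤ j → j ≤ N →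
      ((j : ℝ) - i + 1) * P j (t + 1) + Pi (j + 1) (t + 1)
        ≤ ((J i t : ℝ) - i + 1) * P (J i t) (t + 1) + Pi (J i t + 1) (t + 1))
    (hJlargest : ∀ i t, 1 ≤ i → i ≤ N → 1 ≤ t → t < T → ∀ j, J i t < j → j ≤ N →
      ((j : ℝ) - i + 1) * P j (t + 1) + Pi (j + 1) (t + 1)
        < ((J i t : ℝ) - i + 1) * P (J i t) (t + 1) + Pi (J i t + 1) (t + 1))
    (hPrec : ∀ i t, 1 ≤ i → i ≤ N → 1 ≤ t → t < T → P i t = P (J i t) (t + 1))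
    (hPirec : ∀ i t, 1 ≤ i → i ≤ N → 1 ≤ t → t < T →
      Pi i t = ((J i t : ℝ) - i + 1) * P (J i t) (t + 1) + Pi (J i t + 1) (t + 1)) :
    ∀ t i k, 1 ≤ t → t < T → 1 ≤ i → i ≤ k → k ≤ N → P k (t + 1) ≤ P i (t + 1) := by

  have key : ∀ d s, s + d = T → 1 ≤ s → ∀ i k, 1 ≤ i → i ≤ k → k ≤ N → P k s ≤ P i s := by
    intro d
    induction d with
    | zero =>
      intro s hs hs1 i k hi hik hkN
      have hsT : s = T := by omega
      have hiN : i ≤ N := le_trans hik hkN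
      obtain ⟨hyi1, hyi2, hyi3⟩ := hy i hi hiN
      obtain ⟨hyk1, hyk2, hyk3⟩ := hy k (le_trans hi hik) hkN
      rw [hsT, hPbase i hi hiN, hPbase k (le_trans hi hik) hkN]
      by_contra hcon
      push_neg at hcon
      -- if y i ≤ y k then monotonicity of v contradicts
      have hBA : y k < y i := by
        by_contra hle
        push_neg at hle
        exact absurd (hmono (y i) (y k) (le_trans hi hyi1) hle hyk2) (not_le.mpr hcon)
      have hik' : i < k := by
        rcases lt_or_eq_of_le hik with h | h
        · exact h
        · subst h; exact absurd rfl (ne_of_lt hcon)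
      have h1 := hyi3 (y k) (le_trans hik hyk1) hyk2
      have h2 := hyk3 (y i) (le_of_lt (lt_of_le_of_lt hyk1 hBA)) hyi2
      have hci : (i : ℝ) + 1 ≤ (k : ℝ) := by exact_mod_cast hik'
      nlinarith [mul_pos (by linarith : (0:ℝ) < (k:ℝ) - i) (by linarith : (0:ℝ) < v (y k) - v (y i))]
    | succ d ih =>
      intro s hs hs1 i k hi hik hkN
      have hsT : s < T := by omega
      have hIH : ∀ i k, 1 ≤ i → i ≤ k → k ≤ N → P k (s+1) ≤ P i (s+1) := by
        intro i k hi hik hkN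
        exact ih (s+1) (by omega) (by omega) i k hi hik hkN
      have hkk : 1 ≤ k := le_trans hi hik
      have hiN : i ≤ N := le_trans hik hkN
      obtain ⟨hJi1, hJi2⟩ := hJrange i s hi hiN hs1 hsT
      obtain ⟨hJk1, hJk2⟩ := hJrange k s hkk hkN hs1 hsT
      rw [hPrec i s hi hiN hs1 hsT, hPrec k s hkk hkN hs1 hsT]
      by_contra hcon
      push_neg at hcon
      have hBA : J k s < J i s := by
        by_contra hle
        push_neg at hle
        exact absurd (hIH (J i s) (J k s) (le_trans hi hJi1) hle hJk2)
          (not_le.mpr hcon)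
      have h1 := hJmax i s hi hiN hs1 hsT (J k s) (le_trans hik hJk1) hJk2
      have h2 := hJlargest k s hkk hkN hs1 hsT (J i s) hBA hJi2
      have hci : (i : ℝ) ≤ (k : ℝ) := by exact_mod_cast hik
      nlinarith [mul_nonneg (by linarith : (0:ℝ) ≤ (k:ℝ) - i)
        (by linarith : (0:ℝ) ≤ P (J k s) (s+1) - P (J i s) (s+1))]
  intro t i k ht1 htT hi hik hkN
  exact key (T - (t+1)) (t+1) (by omega) (by omega) i k hi hik hkN
end
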